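/- arXiv:1311.4031 — 12 statements merged into one kernel-verified Lean document; each statement's English description precedes it below -/
import Mathlib

section
/- Let L>0 and define g:ℝ→ℝ by g(τ) = √(3τ²−1)·cos(2τL) − 3τ·sin(τL)·sinh(√(3τ²−1)·L) − √(3τ²−1)·cos(τL)·cosh(√(3τ²−1)·L). Then there exist a positive integer J and a constant C>0 such that for every integer j ≥ J the equation g(τ)=0 has exactly one solution τ_j in the interval [jπ/L, (j+1)π/L), and this solution satisfies |τ_j − jπ/L − 5π/(6L)| ≤ C/j. -/
/-!
Multiplying the characteristic function by `-2 e^{-sL}`, `s = √(3τ² - 1)`, leaves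
`2√3 τ sin(τL + π/6)` plus a remainder which, for `τ ≥ 1`, is `O(1/τ)` and has a bounded
derivative: `s - √3 τ = -1/(s + √3 τ)`, and every other term carries a factor `e^{-sL}`.
On `[jπ/L, (j+1)π/L)` the phase `u = τL - jπ - 5π/6` runs through `[-5π/6, π/6)`, and up to the
sign `(-1)^(j+1)` the equation reads `2√3 τ sin u + O(1/τ) = 0`. A zero forces `|sin u| = O(1/τ²)`,
hence `|u| = O(1/τ²)` by Jordan's inequality, which is the asymptotic formula. On the window
`|u| ≤ π/6` the derivative is dominated by `2√3 τ L cos u`, so the function is strictly monotone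
there and changes sign; this gives existence and uniqueness.
-/

open Real Set

theorem Real.abs_le_of_abs_sin_lt_half {u : ℝ} (hu : |u| ≤ 5 * π / 6) (h : |sin u| < 1 / 2) :
    |u| ≤ π / 2 * |sin u| := by
  have hπ := pi_pos
  rw [abs_sin_eq_sin_abs_of_abs_le_pi (by linarith)] at h ⊢
  have hu₂ : |u| ≤ π / 2 := by
    by_contra! hlt
    have h6 : sin (π / 6) ≤ sin (π - |u|) :=
      sin_le_sin_of_le_of_le_pi_div_two (by linarith) (by linarith) (by linarith)
    rw [sin_pi_div_six, sin_pi_sub] at h6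
    linarith
  have hJordan := mul_le_sin (abs_nonneg u) hu₂
  rw [div_mul_eq_mul_div, div_le_iff₀ hπ] at hJordan
  linarith

def BoundedC1At (f : ℝ → ℝ) (x a a' : ℝ) : Prop :=
  |f x| ≤ a ∧ ∃ f', HasDerivAt f f' x ∧ |f'| ≤ a'

namespace BoundedC1At

variable {f g : ℝ → ℝ} {x a a' b b' : ℝ}

theorem mono (h : BoundedC1At f x a a') (hab : a ≤ b) (hab' : a' ≤ b') :
    BoundedC1At f x b b' :=
  ⟨h.1.trans hab, h.2.imp fun _ hf => ⟨hf.1, hf.2.trans hab'⟩⟩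

theorem of_abs_le (h : BoundedC1At f x a a') (hb : |f x| ≤ b) : BoundedC1At f x b a' :=
  ⟨hb, h.2⟩

theorem add (hf : BoundedC1At f x a a') (hg : BoundedC1At g x b b') :
    BoundedC1At (fun y => f y + g y) x (a + b) (a' + b') := by
  obtain ⟨hfx, f', hf', hf'a⟩ := hf
  obtain ⟨hgx, g', hg', hg'b⟩ := hg
  exact ⟨(abs_add_le _ _).trans (add_le_add hfx hgx), _, hf'.add hg',
    (abs_add_le _ _).trans (add_le_add hf'a hg'b)⟩

theorem sub (hf : BoundedC1At f x a a') (hg : BoundedC1At g x b b') :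
    BoundedC1At (fun y => f y - g y) x (a + b) (a' + b') := by
  obtain ⟨hfx, f', hf', hf'a⟩ := hf
  obtain ⟨hgx, g', hg', hg'b⟩ := hg
  exact ⟨(abs_sub _ _).trans (add_le_add hfx hgx), _, hf'.sub hg',
    (abs_sub _ _).trans (add_le_add hf'a hg'b)⟩

theorem mul (hf : BoundedC1At f x a a') (hg : BoundedC1At g x b b') :
    BoundedC1At (fun y => f y * g y) x (a * b) (a' * b + a * b') := by
  obtain ⟨hfx, f', hf', hf'a⟩ := hf
  obtain ⟨hgx, g', hg', hg'b⟩ := hg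
  have ha : 0 ≤ a := (abs_nonneg _).trans hfx
  have ha' : 0 ≤ a' := (abs_nonneg _).trans hf'a
  refine ⟨?_, _, hf'.mul hg', ?_⟩
  · rw [abs_mul]; exact mul_le_mul hfx hgx (abs_nonneg _) ha
  · refine (abs_add_le _ _).trans (add_le_add ?_ ?_) <;> rw [abs_mul]
    · exact mul_le_mul hf'a hgx (abs_nonneg _) ha'
    · exact mul_le_mul hfx hg'b (abs_nonneg _) ha

theorem const_mul (hf : BoundedC1At f x a a') (k : ℝ) :
    BoundedC1At (fun y => k * f y) x (|k| * a) (|k| * a') := by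
  obtain ⟨hfx, f', hf', hf'a⟩ := hf
  refine ⟨?_, _, hf'.const_mul k, ?_⟩ <;> rw [abs_mul] <;> gcongr

end BoundedC1At

theorem boundedC1At_id (x : ℝ) : BoundedC1At (fun y => y) x |x| 1 :=
  ⟨le_rfl, 1, hasDerivAt_id' x, by simp⟩

theorem boundedC1At_sin {f : ℝ → ℝ} {f' x : ℝ} (hf : HasDerivAt f f' x) :
    BoundedC1At (fun y => sin (f y)) x 1 |f'| :=
  ⟨abs_sin_le_one _, _, hf.sin, by
    rw [abs_mul]; exact mul_le_of_le_one_left (abs_nonneg _) (abs_cos_le_one _)⟩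

theorem boundedC1At_cos {f : ℝ → ℝ} {f' x : ℝ} (hf : HasDerivAt f f' x) :
    BoundedC1At (fun y => cos (f y)) x 1 |f'| :=
  ⟨abs_cos_le_one _, _, hf.cos, by
    rw [abs_mul, abs_neg]; exact mul_le_of_le_one_left (abs_nonneg _) (abs_sin_le_one _)⟩

section PerturbedSine

variable {c L M K : ℝ} {e : ℝ → ℝ} {x₀ : ℝ}

theorem abs_sub_le_of_perturbedSine_eq_zero (hL : 0 < L) (hc : 1 ≤ c) {τ : ℝ}
    (hτ : τ ∈ Ico x₀ (x₀ + π / L)) (hτ₀ : 0 < τ) (he : |e τ| ≤ M / τ)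
    (hM : M / τ ^ 2 < 1 / 2) (hF : c * τ * sin (L * (τ - x₀) - 5 * π / 6) + e τ = 0) :
    |τ - x₀ - 5 * π / (6 * L)| ≤ π * M / (2 * L * τ ^ 2) := by
  set u := L * (τ - x₀) - 5 * π / 6 with hu_def
  have hu : |u| ≤ 5 * π / 6 := by
    have h₁ : 0 ≤ L * (τ - x₀) := mul_nonneg hL.le (by linarith [hτ.1])
    have h₂ : L * (τ - x₀) < π := by
      have := hτ.2; rw [← lt_div_iff₀' hL]; linarith
    rw [abs_le]; constructor <;> linarith [pi_pos, hu_def]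
  have hsin : |sin u| ≤ M / τ ^ 2 := by
    have h : c * τ * |sin u| ≤ M / τ := by
      rw [← abs_of_pos (by positivity : 0 < c * τ), ← abs_mul, eq_neg_of_add_eq_zero_left hF,
        abs_neg]
      exact he
    rw [le_div_iff₀ (by positivity)]
    rw [le_div_iff₀ hτ₀] at h
    nlinarith [mul_nonneg (sub_nonneg.2 hc) (mul_nonneg (sq_nonneg τ) (abs_nonneg (sin u)))]
  have hτu : τ - x₀ - 5 * π / (6 * L) = u / L := by
    field_simp; ring
  rw [hτu, abs_div, abs_of_pos hL, div_le_iff₀ hL]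
  calc |u| ≤ π / 2 * |sin u| := abs_le_of_abs_sin_lt_half hu (hsin.trans_lt hM)
    _ ≤ π / 2 * (M / τ ^ 2) := by gcongr
    _ = π * M / (2 * L * τ ^ 2) * L := by field_simp

theorem hasDerivAt_perturbedSine {D τ : ℝ} (hD : HasDerivAt e D τ) :
    HasDerivAt (fun τ => c * τ * sin (L * (τ - x₀) - 5 * π / 6) + e τ)
      (c * sin (L * (τ - x₀) - 5 * π / 6) + c * τ * (cos (L * (τ - x₀) - 5 * π / 6) * L) + D)
      τ := by
  have hlin : HasDerivAt (fun τ => L * (τ - x₀) - 5 * π / 6) L τ := by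
    simpa using (((hasDerivAt_id τ).sub_const x₀).const_mul L).sub_const (5 * π / 6)
  have hmain := ((hasDerivAt_id τ).const_mul c).mul hlin.sin
  simp only [mul_one, id] at hmain
  exact hmain.add hD

theorem strictMonoOn_perturbedSine (hL : 0 < L) (hc : 1 ≤ c)
    (he : ∀ τ ∈ Icc (x₀ + 2 * π / (3 * L)) (x₀ + π / L), ∃ D, HasDerivAt e D τ ∧ |D| ≤ K)
    (hK : 2 * K + 2 < L * x₀) :
    StrictMonoOn (fun τ => c * τ * sin (L * (τ - x₀) - 5 * π / 6) + e τ)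
      (Icc (x₀ + 2 * π / (3 * L)) (x₀ + π / L)) := by
  have hπ := pi_pos
  have hu : ∀ τ ∈ Icc (x₀ + 2 * π / (3 * L)) (x₀ + π / L),
      |L * (τ - x₀) - 5 * π / 6| ≤ π / 6 := by
    intro τ ⟨h₁, h₂⟩
    have h₁' : 2 * π / 3 ≤ L * (τ - x₀) := by
      rw [← div_le_iff₀' hL]; field_simp at h₁ ⊢; linarith
    have h₂' : L * (τ - x₀) ≤ π := by
      rw [← le_div_iff₀' hL]; linarith
    rw [abs_le]; constructor <;> linarith
  refine strictMonoOn_of_deriv_pos (convex_Icc _ _) ?_ ?_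
  · intro τ hτ
    obtain ⟨D, hD, -⟩ := he τ hτ
    exact (hasDerivAt_perturbedSine hD).continuousAt.continuousWithinAt
  · intro τ hτ
    rw [interior_Icc] at hτ
    obtain ⟨D, hD, hDK⟩ := he τ (Ioo_subset_Icc_self hτ)
    rw [(hasDerivAt_perturbedSine hD).deriv]
    set u := L * (τ - x₀) - 5 * π / 6
    -- `cos u ≥ 1/2` makes the derivative at least `c (τL/2 - 1) - K`
    have hcos : 1 / 2 ≤ cos u := by
      rw [← cos_abs, ← cos_pi_div_three]
      exact cos_le_cos_of_nonneg_of_le_pi (abs_nonneg u) (by linarith)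
        ((hu τ (Ioo_subset_Icc_self hτ)).trans (by linarith))
    have hτL : L * x₀ ≤ τ * L := by
      have : x₀ ≤ τ := by linarith [hτ.1, (by positivity : 0 < 2 * π / (3 * L))]
      nlinarith
    have hD := neg_abs_le D
    have hsin := neg_one_le_sin u
    have hτL₀ : 0 ≤ τ * L := by linarith [abs_nonneg D]
    nlinarith [mul_le_mul_of_nonneg_left hcos (mul_nonneg (by linarith : 0 ≤ c) hτL₀),
      mul_nonneg (by linarith : 0 ≤ c) (by linarith : 0 ≤ sin u + 1),
      mul_nonneg (sub_nonneg.2 hc) (by linarith [abs_nonneg D] : 0 ≤ τ * L / 2 - 1)]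

theorem abs_lt_half_mul_of_abs_le_div (hc : 1 ≤ c) {τ : ℝ} (hτ : 0 < τ)
    (he : |e τ| ≤ M / τ) (hM : 2 * M < τ ^ 2) : |e τ| < c * τ / 2 := by
  rw [le_div_iff₀ hτ] at he
  nlinarith [abs_nonneg (e τ)]

theorem mem_Icc_of_perturbedSine_eq_zero (hL : 0 < L) (hc : 1 ≤ c) {τ : ℝ}
    (hτ : τ ∈ Ico x₀ (x₀ + π / L)) (hτ₀ : 0 < τ) (he : |e τ| ≤ M / τ)
    (hM : 3 * M ≤ τ ^ 2) (hF : c * τ * sin (L * (τ - x₀) - 5 * π / 6) + e τ = 0) :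
    τ ∈ Icc (x₀ + 2 * π / (3 * L)) (x₀ + π / L) := by
  have hτ₂ := pow_pos hτ₀ 2
  have hloc := abs_sub_le_of_perturbedSine_eq_zero hL hc hτ hτ₀ he
    (by rw [div_lt_iff₀ hτ₂]; linarith) hF
  have hwin : π * M / (2 * L * τ ^ 2) ≤ π / (6 * L) := by
    rw [div_le_div_iff₀ (by positivity) (by positivity)]
    nlinarith [mul_pos pi_pos hL]
  obtain ⟨h₁, -⟩ := abs_le.1 (hloc.trans hwin)
  refine ⟨?_, hτ.2.le⟩
  field_simp at h₁ ⊢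
  linarith

theorem existsUnique_perturbedSine_root (hL : 0 < L) (hc : 1 ≤ c) {T : ℝ}
    (he : ∀ τ ≥ T, BoundedC1At e τ (M / τ) K)
    (hT : T ≤ x₀) (hM : 3 * M ≤ x₀ ^ 2) (hK : 2 * K + 2 < L * x₀) :
    ∃ τ, (τ ∈ Ico x₀ (x₀ + π / L) ∧ c * τ * sin (L * (τ - x₀) - 5 * π / 6) + e τ = 0) ∧
      |τ - x₀ - 5 * π / (6 * L)| ≤ π * M / (2 * L * x₀ ^ 2) ∧
      ∀ τ', (τ' ∈ Ico x₀ (x₀ + π / L) ∧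
        c * τ' * sin (L * (τ' - x₀) - 5 * π / 6) + e τ' = 0) → τ' = τ := by
  set F := fun τ => c * τ * sin (L * (τ - x₀) - 5 * π / 6) + e τ with hF
  have hπ := pi_pos
  have hx₀ : 0 < x₀ := by nlinarith [(abs_nonneg _).trans (he x₀ hT).2.choose_spec.2]
  have hfar : ∀ τ, x₀ ≤ τ → 0 < τ ∧ 3 * M ≤ τ ^ 2 ∧ |e τ| ≤ M / τ := fun τ hτ =>
    ⟨by linarith, hM.trans (by gcongr), (he τ (hT.trans hτ)).1⟩
  have hM₀ : 0 ≤ M := by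
    have h := (hfar x₀ le_rfl).2.2
    rw [le_div_iff₀ hx₀] at h
    exact (mul_nonneg (abs_nonneg _) hx₀.le).trans h
  set a := x₀ + 2 * π / (3 * L)
  set b := x₀ + π / L
  have hxa : x₀ < a := lt_add_of_pos_right _ (by positivity)
  have hab : a < b := by simp only [a, b]; field_simp; linarith
  have hFa : F a < 0 := by
    obtain ⟨ha₀, haM, hea⟩ := hfar a hxa.le
    have hua : L * (a - x₀) - 5 * π / 6 = -(π / 6) := by simp only [a]; field_simp; ring
    have := abs_lt_half_mul_of_abs_le_div hc ha₀ hea (by nlinarith)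
    simp only [hF, hua, sin_neg, sin_pi_div_six]
    linarith [le_abs_self (e a)]
  have hFb : 0 < F b := by
    obtain ⟨hb₀, hbM, heb⟩ := hfar b (hxa.trans hab).le
    have hub : L * (b - x₀) - 5 * π / 6 = π / 6 := by simp only [b]; field_simp; ring
    have := abs_lt_half_mul_of_abs_le_div hc hb₀ heb (by nlinarith)
    simp only [hF, hub, sin_pi_div_six]
    linarith [neg_abs_le (e b)]
  have hcont : ContinuousOn F (Icc a b) := fun τ hτ =>
    (hasDerivAt_perturbedSine (he τ (by linarith [hτ.1])).2.choose_spec.1).continuousAt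
      |>.continuousWithinAt
  obtain ⟨τ, hτab, hτF⟩ := intermediate_value_Ioo hab.le hcont ⟨hFa, hFb⟩
  have hτ : τ ∈ Ico x₀ b := ⟨by linarith [hτab.1], hτab.2⟩
  obtain ⟨hτ₀, hτM, heτ⟩ := hfar τ hτ.1
  refine ⟨τ, ⟨hτ, hτF⟩, ?_, fun τ' ⟨hτ', hτ'F⟩ => ?_⟩
  · refine (abs_sub_le_of_perturbedSine_eq_zero hL hc hτ hτ₀ heτ
      (by rw [div_lt_iff₀ (by positivity)]; linarith [pow_pos hτ₀ 2]) hτF).trans ?_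
    gcongr
    exact hτ.1
  · obtain ⟨hτ'₀, hτ'M, heτ'⟩ := hfar τ' hτ'.1
    have hmono := strictMonoOn_perturbedSine hL hc (fun τ hτ => (he τ (by linarith [hτ.1])).2) hK
    exact hmono.injOn (mem_Icc_of_perturbedSine_eq_zero hL hc hτ' hτ'₀ heτ' hτ'M hτ'F)
      (Ioo_subset_Icc_self hτab) (hτ'F.trans hτF.symm)

end PerturbedSine

noncomputable section

def expRate (τ : ℝ) : ℝ := √(3 * τ ^ 2 - 1)

def decay (L τ : ℝ) : ℝ := exp (-(expRate τ * L))

def charFun (L τ : ℝ) : ℝ :=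
  expRate τ * cos (2 * τ * L) - 3 * τ * sin (τ * L) * sinh (expRate τ * L)
    - expRate τ * cos (τ * L) * cosh (expRate τ * L)

def charRemainder (L τ : ℝ) : ℝ :=
  (expRate τ - √3 * τ) * cos (τ * L)
    + decay L τ * (decay L τ * (expRate τ * cos (τ * L) - 3 * τ * sin (τ * L))
      - 2 * expRate τ * cos (2 * τ * L))

end

theorem charFun_eq (L τ : ℝ) :
    charFun L τ = -(exp (expRate τ * L) / 2) *
      (2 * √3 * τ * sin (τ * L + π / 6) + charRemainder L τ) := by
  have h3 : √3 * √3 = 3 := mul_self_sqrt (by norm_num)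
  rw [charFun, charRemainder, decay, sin_add, sin_pi_div_six, cos_pi_div_six, sinh_eq, cosh_eq,
    exp_neg]
  field_simp
  linear_combination (exp (expRate τ * L) ^ 2 * τ * sin (τ * L)) * h3

theorem charFun_eq_zero_iff {L : ℝ} (hL : L ≠ 0) (j : ℕ) (τ : ℝ) :
    charFun L τ = 0 ↔ 2 * √3 * τ * sin (L * (τ - j * π / L) - 5 * π / 6)
      + (-1) ^ (j + 1) * charRemainder L τ = 0 := by
  have hshift : τ * L + π / 6 = L * (τ - j * π / L) - 5 * π / 6 + (j + 1 : ℕ) * π := by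
    push_cast; field_simp; ring
  have hσ : ((-1 : ℝ) ^ (j + 1)) ^ 2 = 1 := by
    rw [← pow_mul, mul_comm, pow_mul, neg_one_sq, one_pow]
  rw [charFun_eq, hshift, sin_add_nat_mul_pi, mul_eq_zero, neg_eq_zero, div_eq_zero_iff,
    or_iff_right (by simp [exp_ne_zero])]
  constructor <;> intro h
  · linear_combination (-1) ^ (j + 1) * h
      - 2 * √3 * τ * sin (L * (τ - j * π / L) - 5 * π / 6) * hσ
  · linear_combination (-1) ^ (j + 1) * h - charRemainder L τ * hσ

section Bounds

variable {L τ : ℝ}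

theorem expRate_sq (hτ : 1 ≤ τ) : expRate τ ^ 2 = 3 * τ ^ 2 - 1 :=
  sq_sqrt (by nlinarith)

theorem le_expRate (hτ : 1 ≤ τ) : τ ≤ expRate τ :=
  le_sqrt_of_sq_le (by nlinarith)

theorem expRate_le (hτ : 1 ≤ τ) : expRate τ ≤ 2 * τ :=
  sqrt_le_iff.2 ⟨by linarith, by nlinarith⟩

theorem abs_expRate_sub_le (hτ : 1 ≤ τ) : |expRate τ - √3 * τ| ≤ 1 / (2 * τ) := by
  have h3 : √3 ^ 2 = 3 := sq_sqrt (by norm_num)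
  have h3' : 1 ≤ √3 := one_le_sqrt.2 (by norm_num)
  have hs := le_expRate hτ
  have hsum : 2 * τ ≤ expRate τ + √3 * τ := by nlinarith
  have hdiff : expRate τ - √3 * τ = -1 / (expRate τ + √3 * τ) := by
    rw [eq_div_iff (by linarith)]
    linear_combination expRate_sq hτ - τ ^ 2 * h3
  rw [hdiff, abs_div, abs_neg, abs_one, abs_of_pos (by linarith)]
  gcongr

theorem boundedC1At_expRate (hτ : 1 ≤ τ) : BoundedC1At expRate τ (2 * τ) 3 := by
  have hs := le_expRate hτ
  refine ⟨by rw [abs_of_nonneg (by linarith)]; exact expRate_le hτ, 3 * τ / expRate τ, ?_, ?_⟩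
  · refine (((hasDerivAt_pow 2 τ).const_mul 3).sub_const 1 |>.sqrt (by nlinarith)).congr_deriv ?_
    rw [← expRate]
    field_simp
    norm_num
  · rw [abs_of_nonneg (div_nonneg (by linarith) (by linarith)), div_le_iff₀ (by linarith)]
    linarith

theorem decay_le_one (hL : 0 ≤ L) (hτ : 1 ≤ τ) : decay L τ ≤ 1 :=
  exp_le_one_iff.2 (neg_nonpos.2 (mul_nonneg (by linarith [le_expRate hτ]) hL))

theorem decay_le_exp (hL : 0 ≤ L) (hτ : 1 ≤ τ) : decay L τ ≤ exp (-(τ * L)) :=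
  exp_le_exp.2 (neg_le_neg (mul_le_mul_of_nonneg_right (le_expRate hτ) hL))

theorem mul_decay_le_one (hL : 0 ≤ L) (hτ : 1 ≤ τ) : τ * L * decay L τ ≤ 1 := by
  have hx : 0 ≤ τ * L := by positivity
  calc τ * L * decay L τ ≤ exp (τ * L) * exp (-(τ * L)) :=
        mul_le_mul (by linarith [add_one_le_exp (τ * L)]) (decay_le_exp hL hτ) (exp_pos _).le
          (exp_pos _).le
    _ = 1 := by rw [← exp_add, add_neg_cancel, exp_zero]

theorem sq_mul_decay_le_two (hL : 0 ≤ L) (hτ : 1 ≤ τ) : (τ * L) ^ 2 * decay L τ ≤ 2 := by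
  have hx : 0 ≤ τ * L := by positivity
  calc (τ * L) ^ 2 * decay L τ ≤ (2 * exp (τ * L)) * exp (-(τ * L)) :=
        mul_le_mul (by linarith [quadratic_le_exp_of_nonneg hx]) (decay_le_exp hL hτ)
          (exp_pos _).le (by positivity)
    _ = 2 := by rw [mul_assoc, ← exp_add, add_neg_cancel, exp_zero, mul_one]

theorem boundedC1At_decay (hL : 0 ≤ L) (hτ : 1 ≤ τ) :
    BoundedC1At (decay L) τ (decay L τ) (3 * L * decay L τ) := by
  obtain ⟨-, s', hs', hs'3⟩ := boundedC1At_expRate hτ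
  refine ⟨(abs_of_pos (exp_pos _)).le, _, ((hs'.mul_const L).neg).exp, ?_⟩
  rw [abs_mul, abs_of_pos (exp_pos _), abs_neg, abs_mul, abs_of_nonneg hL, mul_comm]
  show |s'| * L * decay L τ ≤ 3 * L * decay L τ
  exact mul_le_mul_of_nonneg_right (mul_le_mul_of_nonneg_right hs'3 hL) (exp_pos _).le

theorem boundedC1At_charRemainder (hL : 0 < L) (hτ : 1 ≤ τ) :
    BoundedC1At (charRemainder L) τ ((1 / 2 + 18 / L ^ 2) / τ) (72 + L) := by
  have hE₀ : 0 ≤ decay L τ := (exp_pos _).le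
  have hE₁ := decay_le_one hL.le hτ
  have hτE := mul_decay_le_one hL.le hτ
  have hτ₀ : 0 < τ := by linarith
  have hτL : 0 ≤ τ * L := by positivity
  have hs := boundedC1At_expRate hτ
  have hid : BoundedC1At (fun y => y) τ τ 1 := by
    simpa [abs_of_pos hτ₀] using boundedC1At_id τ
  have hcos := boundedC1At_cos (hasDerivAt_mul_const (x := τ) L)
  have hsin := boundedC1At_sin (hasDerivAt_mul_const (x := τ) L)
  have hcos₂ := boundedC1At_cos (((hasDerivAt_id τ).const_mul 2).mul_const L)
  simp only [abs_of_pos hL, abs_of_pos (by positivity : 0 < 2 * L), id, mul_one]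
    at hcos hsin hcos₂
  have hd : BoundedC1At (fun y => (expRate y - √3 * y) * cos (y * L)) τ
      (1 / (2 * τ)) (5 + L) := by
    have h3 : |√3| ≤ 2 := by
      rw [abs_of_nonneg (sqrt_nonneg 3)]; exact sqrt_le_iff.2 (by norm_num)
    refine (((hs.sub (hid.const_mul √3)).of_abs_le (abs_expRate_sub_le hτ)).mul hcos).mono
      (by rw [mul_one]) ?_
    have : 1 / (2 * τ) ≤ 1 := by rw [div_le_one (by positivity)]; linarith
    nlinarith
  have hA : BoundedC1At (fun y => expRate y * cos (y * L) - 3 * y * sin (y * L)) τ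
      (5 * τ) (6 + 5 * τ * L) :=
    ((hs.mul hcos).sub ((hid.const_mul 3).mul hsin)).mono (by norm_num; linarith)
      (by norm_num; linarith)
  have hR : BoundedC1At (fun y => decay L y * (expRate y * cos (y * L) - 3 * y * sin (y * L))
      - 2 * expRate y * cos (2 * y * L)) τ (9 * τ) (12 + 28 * τ * L) :=
    (((boundedC1At_decay hL.le hτ).mul hA).sub ((hs.const_mul 2).mul hcos₂)).mono
      (by norm_num; nlinarith) (by norm_num; nlinarith [mul_le_mul_of_nonneg_left hE₁ hτL])
  refine (hd.add ((boundedC1At_decay hL.le hτ).mul hR)).mono ?_ (by nlinarith)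
  have h2 := sq_mul_decay_le_two hL.le hτ
  rw [add_div, div_div]
  gcongr
  rw [le_div_iff₀ (by positivity), le_div_iff₀ (by positivity)]
  nlinarith

end Bounds

/-- For `j` large, the characteristic equation has exactly one root `τ_j` in
`[jπ/L, (j+1)π/L)`, and `τ_j = jπ/L + 5π/(6L) + O(1/j)`. -/
theorem stmt_0 (L : ℝ) (hL : 0 < L) :
    ∃ (J : ℕ) (C : ℝ), 0 < J ∧ 0 < C ∧
      ∀ j : ℕ, J ≤ j →
        ∃ τ : ℝ,
          (τ ∈ Set.Ico ((j : ℝ) * Real.pi / L) (((j : ℝ) + 1) * Real.pi / L) ∧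
            Real.sqrt (3 * τ ^ 2 - 1) * Real.cos (2 * τ * L)
              - 3 * τ * Real.sin (τ * L) * Real.sinh (Real.sqrt (3 * τ ^ 2 - 1) * L)
              - Real.sqrt (3 * τ ^ 2 - 1) * Real.cos (τ * L)
                  * Real.cosh (Real.sqrt (3 * τ ^ 2 - 1) * L) = 0) ∧
          |τ - (j : ℝ) * Real.pi / L - 5 * Real.pi / (6 * L)| ≤ C / (j : ℝ) ∧
          ∀ τ' : ℝ,
            (τ' ∈ Set.Ico ((j : ℝ) * Real.pi / L) (((j : ℝ) + 1) * Real.pi / L) ∧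
              Real.sqrt (3 * τ' ^ 2 - 1) * Real.cos (2 * τ' * L)
                - 3 * τ' * Real.sin (τ' * L) * Real.sinh (Real.sqrt (3 * τ' ^ 2 - 1) * L)
                - Real.sqrt (3 * τ' ^ 2 - 1) * Real.cos (τ' * L)
                    * Real.cosh (Real.sqrt (3 * τ' ^ 2 - 1) * L) = 0) →
            τ' = τ := by
  set M := 1 / 2 + 18 / L ^ 2
  set K := 72 + L
  have hc : 1 ≤ 2 * √3 := by linarith [one_le_sqrt.2 (by norm_num : (1 : ℝ) ≤ 3)]
  have he (j : ℕ) : ∀ τ ≥ 1,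
      BoundedC1At (fun τ => (-1) ^ (j + 1) * charRemainder L τ) τ (M / τ) K := fun τ hτ => by
    simpa only [abs_pow, abs_neg, abs_one, one_pow, one_mul] using
      (boundedC1At_charRemainder hL hτ).const_mul ((-1 : ℝ) ^ (j + 1))
  obtain ⟨J, hJ⟩ : ∃ J : ℕ, ∀ j ≥ J, 1 + 3 * M + (2 * K + 2) / L ≤ j * π / L :=
    Filter.eventually_atTop.1 <| ((tendsto_natCast_atTop_atTop.atTop_mul_const pi_pos)
      |>.atTop_div_const hL).eventually_ge_atTop _
  refine ⟨J + 1, M * L, J.succ_pos, by positivity, fun j hj => ?_⟩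
  have hx := hJ j (by omega)
  have hKL : L * ((2 * K + 2) / L) = 2 * K + 2 := mul_div_cancel₀ _ hL.ne'
  have hM₀ : 0 ≤ M := by positivity
  have hK₀ : 0 ≤ (2 * K + 2) / L := by positivity
  obtain ⟨τ, ⟨hτ, hτF⟩, hbound, huniq⟩ := existsUnique_perturbedSine_root hL hc (he j)
    (by linarith) (by nlinarith) (by nlinarith)
  rw [show (j : ℝ) * π / L + π / L = (j + 1) * π / L by ring] at hτ huniq
  refine ⟨τ, ⟨hτ, (charFun_eq_zero_iff hL.ne' j τ).2 hτF⟩, hbound.trans ?_,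
    fun τ' ⟨hτ', hτ'F⟩ => huniq τ' ⟨hτ', (charFun_eq_zero_iff hL.ne' j τ').1 hτ'F⟩⟩
  have hj : (1 : ℝ) ≤ j := by exact_mod_cast (show 1 ≤ j by omega)
  rw [div_le_div_iff₀ (by positivity) (by positivity)]
  field_simp
  nlinarith [mul_nonneg hM₀ (by nlinarith [pi_gt_three] : 0 ≤ π * j * 2 - 1)]
end

section
/- Let L>0 and τ∈ℝ with 3τ²>1. Set s=√(3τ²−1) and μ=2τ(4τ²−1), and assume the characteristic equation s·cos(2τL) − 3τ·sin(τL)·sinh(sL) − s·cos(τL)·cosh(sL) = 0 holds. Define φ:ℝ→ℂ by φ(x) = e^{−iτx}·[cosh(sx) + ((e^{3iτL} − cosh(sL))/sinh(sL))·sinh(sx)] − e^{2iτx}. Then φ is not identically zero on [0,L], φ(0)=0, φ(L)=0, φ'(0)=φ'(L), and φ'''(x) + φ'(x) + iμ·φ(x) = 0 for all x∈ℝ. -/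
/-!
Write `a = iτ`. Then `φ = A e^{(s-a)x} + B e^{(-s-a)x} - e^{2ax}` with `A + B = 1`, and since
`s² = -3a² - 1` the three exponents are exactly the roots of `r³ + r + iμ`, which gives the ODE.
The coefficient `C` of `sinh` is chosen to make `φ(L) = 0`; with it, `φ'(0) = φ'(L)` becomes,
after clearing `sinh(sL) e^{iτL}`, the characteristic equation written in `u = e^{iτL}`.
If `φ` vanished on `[0, L]`, then `Im C · sinh(sx) = sin(3τx)` there; comparing `x = L` with
`x = L/2` gives `Im C = 0`, so `sin(3τx)` would vanish near `0`, forcing `τ = 0`.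
-/

open Complex

section ExpSum

variable {ι : Type*} [Fintype ι]

noncomputable def expSum (c r : ι → ℂ) (x : ℝ) : ℂ := ∑ j, c j * exp (r j * x)

theorem hasDerivAt_expSum (c r : ι → ℂ) (x : ℝ) :
    HasDerivAt (expSum c r) (expSum (fun j => c j * r j) r x) x := by
  unfold expSum
  refine HasDerivAt.fun_sum fun j _ => ?_
  have h := (((hasDerivAt_id x).ofReal_comp).const_mul (r j)).cexp.const_mul (c j)
  exact h.congr_deriv (by simp only [id, ofReal_one]; ring)

theorem iteratedDeriv_expSum (c r : ι → ℂ) (k : ℕ) :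
    iteratedDeriv k (expSum c r) = expSum (fun j => c j * r j ^ k) r := by
  induction k with
  | zero => simp
  | succ k ih =>
    rw [iteratedDeriv_succ, ih]
    funext x
    rw [(hasDerivAt_expSum _ r x).deriv]
    simp only [pow_succ, mul_assoc]

theorem expSum_cubic_ode (c r : ι → ℂ) (k : ℂ) (hr : ∀ j, r j ^ 3 + r j + k = 0) (x : ℝ) :
    iteratedDeriv 3 (expSum c r) x + deriv (expSum c r) x + k * expSum c r x = 0 := by
  rw [iteratedDeriv_expSum, ← iteratedDeriv_one, iteratedDeriv_expSum]
  simp only [expSum, Finset.mul_sum, ← Finset.sum_add_distrib]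
  refine Finset.sum_eq_zero fun j _ => ?_
  linear_combination c j * exp (r j * x) * hr j

end ExpSum

theorem cube_add_self_sub_eq (a s r : ℂ) (hs : s ^ 2 = -3 * a ^ 2 - 1) :
    r ^ 3 + r - 2 * a * (4 * a ^ 2 + 1) = (r - 2 * a) * ((r + a) ^ 2 - s ^ 2) := by
  linear_combination (r - 2 * a) * hs

theorem two_mul_exp_sq_mul_char (s τ S K θ : ℂ) :
    2 * exp (θ * I) ^ 2 * (s * cos (2 * θ) - 3 * τ * sin θ * S - s * cos θ * K) =
      s * (exp (θ * I) ^ 4 + 1) + 3 * I * τ * S * (exp (θ * I) ^ 3 - exp (θ * I))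
        - s * K * (exp (θ * I) ^ 3 + exp (θ * I)) := by
  set u := exp (θ * I)
  set v := exp (-θ * I)
  have huv : u * v = 1 := by rw [← exp_add]; simp
  have hcos : cos θ = (u + v) / 2 := by rw [← two_cos]; ring
  have hsin : sin θ = (v - u) * I / 2 := by rw [← two_sin]; ring
  rw [cos_two_mul, hcos, hsin]
  linear_combination (s * (2 * u ^ 2 + u * v + 1) - 3 * τ * S * I * u - s * K * u) * huv

theorem Real.eq_zero_of_forall_sin_mul_eq_zero {t L : ℝ} (hL : 0 < L)
    (h : ∀ x ∈ Set.Icc 0 L, Real.sin (t * x) = 0) : t = 0 := by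
  by_contra ht
  have ht' : 0 < |t| := abs_pos.mpr ht
  set x := min L |t|⁻¹
  have hx : 0 < x := lt_min hL (inv_pos.mpr ht')
  have htx : |t * x| ≤ 1 := by
    rw [abs_mul, abs_of_pos hx]
    calc |t| * x ≤ |t| * |t|⁻¹ := by gcongr; exact min_le_right _ _
      _ = 1 := mul_inv_cancel₀ ht'.ne'
  obtain ⟨hlo, hhi⟩ := abs_le.mp htx
  have hzero := (Real.sin_eq_zero_iff_of_lt_of_lt (by linarith [Real.pi_gt_three])
    (by linarith [Real.pi_gt_three])).mp (h x ⟨hx.le, min_le_left _ _⟩)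
  exact mul_ne_zero ht hx.ne' hzero

theorem Real.eq_zero_of_forall_mul_sinh_eq_sin {b s t L : ℝ} (hs : 0 < s) (hL : 0 < L)
    (h : ∀ x ∈ Set.Icc 0 L, b * Real.sinh (s * x) = Real.sin (t * x)) : t = 0 := by
  have hL2 := h (L / 2) ⟨by linarith, by linarith⟩
  have hL1 := h L ⟨hL.le, le_rfl⟩
  rw [show s * L = 2 * (s * (L / 2)) by ring, Real.sinh_two_mul,
    show t * L = 2 * (t * (L / 2)) by ring, Real.sin_two_mul] at hL1
  have hsinh : 0 < Real.sinh (s * (L / 2)) := Real.sinh_pos_iff.mpr (by positivity)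
  have hcos : Real.cos (t * (L / 2)) < Real.cosh (s * (L / 2)) :=
    (Real.cos_le_one _).trans_lt (Real.one_lt_cosh.mpr (by positivity))
  -- the double-angle formulas compare `x = L` with `x = L/2`
  have hb :
      b * Real.sinh (s * (L / 2)) * (Real.cosh (s * (L / 2)) - Real.cos (t * (L / 2))) = 0 := by
    linear_combination hL1 / 2 - Real.cos (t * (L / 2)) * hL2
  have hb0 : b = 0 := by
    simpa [hsinh.ne', (sub_pos.mpr hcos).ne'] using hb
  refine Real.eq_zero_of_forall_sin_mul_eq_zero hL fun x hx => ?_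
  rw [← h x hx, hb0, zero_mul]

noncomputable def eigenFun (τ s : ℝ) (C : ℂ) (x : ℝ) : ℂ :=
  exp (-I * τ * x) * (cosh ((s * x : ℝ)) + C * sinh ((s * x : ℝ))) - exp (2 * I * τ * x)

theorem eigenFun_eq_expSum (τ s : ℝ) (C : ℂ) :
    eigenFun τ s C =
      expSum ![(1 + C) / 2, (1 - C) / 2, -1] ![s - I * τ, -s - I * τ, 2 * I * τ] := by
  funext x
  have hplus : exp ((s - I * τ) * x) = exp (-I * τ * x) * exp ((s * x : ℝ)) := by
    rw [← exp_add]; push_cast; ring_nf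
  have hminus : exp ((-s - I * τ) * x) = exp (-I * τ * x) * exp (-(s * x : ℝ)) := by
    rw [← exp_add]; push_cast; ring_nf
  simp only [eigenFun, expSum, Fin.sum_univ_three, Matrix.cons_val, hplus, hminus, cosh, sinh]
  ring

theorem eigenFun_ode {τ s : ℝ} (hs : s ^ 2 = 3 * τ ^ 2 - 1) (C : ℂ) (x : ℝ) :
    iteratedDeriv 3 (eigenFun τ s C) x + deriv (eigenFun τ s C) x
      + I * (2 * τ * (4 * τ ^ 2 - 1) : ℝ) * eigenFun τ s C x = 0 := by
  have hs' : (s : ℂ) ^ 2 = -3 * (I * τ) ^ 2 - 1 := by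
    have hsC : (s : ℂ) ^ 2 = 3 * τ ^ 2 - 1 := by exact_mod_cast hs
    linear_combination hsC + 3 * (τ : ℂ) ^ 2 * I_sq
  have hk : I * (2 * τ * (4 * τ ^ 2 - 1) : ℝ) = -(2 * (I * τ) * (4 * (I * τ) ^ 2 + 1)) := by
    push_cast; linear_combination (8 * I * τ ^ 3) * I_sq
  rw [hk, eigenFun_eq_expSum]
  refine expSum_cubic_ode _ _ _ (fun j => ?_) x
  rw [← sub_eq_add_neg, cube_add_self_sub_eq _ _ _ hs']
  fin_cases j
  · exact mul_eq_zero_of_right _ (by simp)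
  · exact mul_eq_zero_of_right _ (by simp)
  · exact mul_eq_zero_of_left (by simp; ring) _

theorem eigenFun_zero (τ s : ℝ) (C : ℂ) : eigenFun τ s C 0 = 0 := by
  simp [eigenFun]

theorem eigenFun_eq_zero_of_mul_sinh {τ s L : ℝ} {C : ℂ}
    (hC : C * sinh ((s * L : ℝ)) = exp (3 * I * τ * L) - cosh ((s * L : ℝ))) :
    eigenFun τ s C L = 0 := by
  rw [eigenFun, add_comm, hC, sub_add_cancel, ← exp_add, sub_eq_zero]
  ring_nf

theorem hasDerivAt_eigenFun (τ s : ℝ) (C : ℂ) (x : ℝ) :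
    HasDerivAt (eigenFun τ s C)
      (exp (-I * τ * x) * (s * (sinh ((s * x : ℝ)) + C * cosh ((s * x : ℝ)))
          - I * τ * (cosh ((s * x : ℝ)) + C * sinh ((s * x : ℝ))))
        - 2 * I * τ * exp (2 * I * τ * x)) x := by
  have hlin : ∀ c : ℂ, HasDerivAt (fun y : ℝ => c * y) c x := fun c => by
    simpa using ((hasDerivAt_id x).ofReal_comp).const_mul c
  have hsx : HasDerivAt (fun y : ℝ => ((s * y : ℝ) : ℂ)) s x := by
    simpa using hlin s
  have hcosh := (Complex.hasDerivAt_cosh _).comp x hsx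
  have hsinh := (Complex.hasDerivAt_sinh _).comp x hsx
  have h := ((hlin (-I * τ)).cexp.mul (hcosh.add (hsinh.const_mul C))).sub
    (hlin (2 * I * τ)).cexp
  exact h.congr_deriv (by simp only [Pi.add_apply, Function.comp_apply]; ring)

theorem deriv_eigenFun_zero_eq {τ s L : ℝ} {C : ℂ} (hS : sinh ((s * L : ℝ)) ≠ 0)
    (hC : C * sinh ((s * L : ℝ)) = exp (3 * I * τ * L) - cosh ((s * L : ℝ)))
    (hchar : s * Real.cos (2 * τ * L) - 3 * τ * Real.sin (τ * L) * Real.sinh (s * L)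
      - s * Real.cos (τ * L) * Real.cosh (s * L) = 0) :
    deriv (eigenFun τ s C) 0 = deriv (eigenFun τ s C) L := by
  rw [(hasDerivAt_eigenFun τ s C 0).deriv, (hasDerivAt_eigenFun τ s C L).deriv]
  have hcharC := congrArg ((↑) : ℝ → ℂ) hchar
  push_cast at hS hC hcharC ⊢
  rw [show (2 : ℂ) * τ * L = 2 * (τ * L) by ring] at hcharC
  set S := sinh (s * L)
  set K := cosh (s * L)
  set u := exp (τ * L * I)
  have hP := two_mul_exp_sq_mul_char s τ S K (τ * L)
  have hwu : exp (-I * τ * L) * u = 1 := by rw [← exp_add]; ring_nf; exact exp_zero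
  have hu3 : exp (3 * I * τ * L) = u ^ 3 := by rw [← exp_nat_mul]; ring_nf
  have hu2 : exp (2 * I * τ * L) = u ^ 2 := by rw [← exp_nat_mul]; ring_nf
  have hpyth : K ^ 2 - S ^ 2 = 1 := cosh_sq_sub_sinh_sq _
  rw [hu3] at hC
  rw [hu2]
  simp only [mul_zero, exp_zero, sinh_zero, cosh_zero]
  refine mul_right_cancel₀ (mul_ne_zero hS (exp_ne_zero (τ * L * I))) ?_
  linear_combination (-s * S ^ 2 - s * C * S * K + I * τ * S * (K + C * S)) * hwu
    + (s * u - s * K + I * τ * S) * hC + s * hpyth - hP + 2 * u ^ 2 * hcharC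

theorem im_mul_sinh_eq_sin_of_eigenFun_eq_zero {τ s : ℝ} {C : ℂ} {x : ℝ}
    (h : eigenFun τ s C x = 0) : C.im * Real.sinh (s * x) = Real.sin (3 * τ * x) := by
  have hexp : cosh ((s * x : ℝ)) + C * sinh ((s * x : ℝ)) = exp ((3 * τ * x : ℝ) * I) := by
    rw [eigenFun, sub_eq_zero] at h
    refine mul_left_cancel₀ (exp_ne_zero (-I * τ * x)) ?_
    rw [h, ← exp_add]
    push_cast; ring_nf
  have him := congrArg im hexp
  rw [add_im, cosh_ofReal_im, mul_im, sinh_ofReal_im, sinh_ofReal_re, exp_ofReal_mul_I_im] at him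
  linear_combination him

theorem exists_eigenFun_ne_zero {τ s L : ℝ} (hτ : τ ≠ 0) (hs : 0 < s) (hL : 0 < L) (C : ℂ) :
    ∃ x ∈ Set.Icc 0 L, eigenFun τ s C x ≠ 0 := by
  by_contra! h
  have h3τ := Real.eq_zero_of_forall_mul_sinh_eq_sin hs hL fun x hx =>
    im_mul_sinh_eq_sin_of_eigenFun_eq_zero (h x hx)
  exact mul_ne_zero three_ne_zero hτ h3τ

/-- Under the characteristic equation, `φ` is a nonzero eigenfunction of
`A φ = -φ''' - φ'` with the boundary conditions `φ(0)=φ(L)=0`, `φ'(0)=φ'(L)`,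
for the eigenvalue `iμ`, `μ = 2τ(4τ²-1)`. -/
theorem stmt_1 (L τ : ℝ) (hL : 0 < L) (hτ : 1 < 3 * τ ^ 2)
    (s μ : ℝ) (hs : s = Real.sqrt (3 * τ ^ 2 - 1))
    (hμ : μ = 2 * τ * (4 * τ ^ 2 - 1))
    (hchar : s * Real.cos (2 * τ * L) - 3 * τ * Real.sin (τ * L) * Real.sinh (s * L)
      - s * Real.cos (τ * L) * Real.cosh (s * L) = 0)
    (φ : ℝ → ℂ)
    (hφ : ∀ x : ℝ, φ x =
      Complex.exp (-Complex.I * τ * x) *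
        (Complex.cosh ((s * x : ℝ)) +
          ((Complex.exp (3 * Complex.I * τ * L) - Complex.cosh ((s * L : ℝ))) /
              Complex.sinh ((s * L : ℝ))) * Complex.sinh ((s * x : ℝ))) -
      Complex.exp (2 * Complex.I * τ * x)) :
    (∃ x ∈ Set.Icc (0 : ℝ) L, φ x ≠ 0) ∧
    φ 0 = 0 ∧ φ L = 0 ∧ deriv φ 0 = deriv φ L ∧
    ∀ x : ℝ, iteratedDeriv 3 φ x + deriv φ x + Complex.I * μ * φ x = 0 := by
  have hs0 : 0 < s := hs ▸ Real.sqrt_pos.mpr (by linarith)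
  have hs2 : s ^ 2 = 3 * τ ^ 2 - 1 := by rw [hs, Real.sq_sqrt (by linarith)]
  have hτ0 : τ ≠ 0 := by rintro rfl; norm_num at hτ
  have hS : sinh ((s * L : ℝ)) ≠ 0 := by
    rw [← ofReal_sinh]; exact_mod_cast (Real.sinh_pos_iff.mpr (mul_pos hs0 hL)).ne'
  set C := (exp (3 * I * τ * L) - cosh ((s * L : ℝ))) / sinh ((s * L : ℝ))
  have hC : C * sinh ((s * L : ℝ)) = exp (3 * I * τ * L) - cosh ((s * L : ℝ)) :=
    div_mul_cancel₀ _ hS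
  obtain rfl : φ = eigenFun τ s C := funext hφ
  subst hμ
  exact ⟨exists_eigenFun_ne_zero hτ0 hs0 hL C, eigenFun_zero τ s C,
    eigenFun_eq_zero_of_mul_sinh hC, deriv_eigenFun_zero_eq hS hC hchar, eigenFun_ode hs2 C⟩
end

section
/- Let V be a vector space over ℂ, let K and T be linear maps from V to V, let α,λ∈ℂ, and let n be a positive integer. Set F = ker((K − α·id)ⁿ) and assume that ker((K − α·id)^{n+1}) = F. If K(Tv) = T(Kv) − λ·(Kv) + λ·v for every v∈F, then T(F) ⊆ F, i.e. Tv ∈ F for every v∈F. -/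
/-!
With `N = K - α`, the hypothesis says `N T = T N + λ (1 - K)` on `F`, and `λ (1 - K)` commutes
with `N`. Iterating, `N^(n+1) (T v) = T (N^(n+1) v) + (n+1) λ (1 - K) (N^n v) = 0` for `v ∈ F`,
so `T v ∈ ker N^(n+1) = F`.
-/

namespace Module.End

variable {R M : Type*} [Semiring R] [AddCommMonoid M] [Module R M]

theorem apply_mem_ker_pow (N : Module.End R M) {n : ℕ} {v : M}
    (hv : v ∈ LinearMap.ker (N ^ n)) : N v ∈ LinearMap.ker (N ^ n) := by
  rw [LinearMap.mem_ker, ← mul_apply, ← pow_succ, pow_succ', mul_apply, hv, map_zero]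

theorem pow_succ_apply_eq_of_apply_eq_add {N T C : Module.End R M} {F : Submodule R M}
    (hF : ∀ v ∈ F, N v ∈ F) (hNC : Commute N C) (h : ∀ v ∈ F, N (T v) = T (N v) + C v)
    (k : ℕ) : ∀ v ∈ F, (N ^ (k + 1)) (T v) = T ((N ^ (k + 1)) v) + (k + 1) • C ((N ^ k) v) := by
  induction k with
  | zero =>
    intro v hv
    simpa using h v hv
  | succ k ih =>
    intro v hv
    have hpow (m : ℕ) (w : M) : (N ^ (m + 1)) w = (N ^ m) (N w) := by rw [pow_succ, mul_apply]
    have hNC' : (N ^ (k + 1)) (C v) = C ((N ^ (k + 1)) v) :=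
      LinearMap.congr_fun (hNC.pow_left (k + 1)).eq v
    calc (N ^ (k + 2)) (T v) = (N ^ (k + 1)) (T (N v) + C v) := by
          rw [hpow, h v hv]
      _ = T ((N ^ (k + 1)) (N v)) + (k + 1) • C ((N ^ k) (N v)) + C ((N ^ (k + 1)) v) := by
          rw [map_add, ih (N v) (hF v hv), hNC']
      _ = T ((N ^ (k + 2)) v) + (k + 2) • C ((N ^ (k + 1)) v) := by
          rw [← hpow, ← hpow, add_assoc, ← succ_nsmul]

theorem apply_mem_ker_pow_of_apply_eq_add {N T C : Module.End R M} {n : ℕ}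
    (hker : LinearMap.ker (N ^ (n + 1)) = LinearMap.ker (N ^ n)) (hNC : Commute N C)
    (h : ∀ v ∈ LinearMap.ker (N ^ n), N (T v) = T (N v) + C v) :
    ∀ v ∈ LinearMap.ker (N ^ n), T v ∈ LinearMap.ker (N ^ n) := by
  intro v hv
  have hv' : (N ^ (n + 1)) v = 0 := hker.ge hv
  rw [← hker, LinearMap.mem_ker,
    pow_succ_apply_eq_of_apply_eq_add (fun _ => N.apply_mem_ker_pow) hNC h n v hv, hv', hv]
  simp

end Module.End

theorem stmt_3_general {V : Type*} [AddCommGroup V] [Module ℂ V]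
    (K T : Module.End ℂ V) (α lam : ℂ) (n : ℕ)
    (hker : LinearMap.ker ((K - α • (1 : Module.End ℂ V)) ^ (n + 1)) =
      LinearMap.ker ((K - α • (1 : Module.End ℂ V)) ^ n))
    (hcomm : ∀ v ∈ LinearMap.ker ((K - α • (1 : Module.End ℂ V)) ^ n),
      K (T v) = T (K v) - lam • (K v) + lam • v) :
    ∀ v ∈ LinearMap.ker ((K - α • (1 : Module.End ℂ V)) ^ n),
      T v ∈ LinearMap.ker ((K - α • (1 : Module.End ℂ V)) ^ n) := by
  refine Module.End.apply_mem_ker_pow_of_apply_eq_add (C := lam • (1 - K)) hker ?_ ?_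
  · have hNK : Commute (K - α • 1) K :=
      (Commute.refl K).sub_left ((Commute.one_left K).smul_left α)
    exact ((Commute.one_right _).sub_right hNK).smul_right lam
  · intro v hv
    simp only [LinearMap.sub_apply, LinearMap.smul_apply, Module.End.one_apply, map_sub,
      map_smul, hcomm v hv]
    module

/-- If `K (T v) = T (K v) - λ (K v) + λ v` on the generalized eigenspace
`F = ker (K - α)^n`, and `ker (K - α)^(n+1) = F`, then `F` is invariant under `T`. -/
theorem stmt_3 {V : Type*} [AddCommGroup V] [Module ℂ V]
    (K T : Module.End ℂ V) (α lam : ℂ) (n : ℕ) (hn : 1 ≤ n)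
    (hker : LinearMap.ker ((K - α • (1 : Module.End ℂ V)) ^ (n + 1)) =
      LinearMap.ker ((K - α • (1 : Module.End ℂ V)) ^ n))
    (hcomm : ∀ v ∈ LinearMap.ker ((K - α • (1 : Module.End ℂ V)) ^ n),
      K (T v) = T (K v) - lam • (K v) + lam • v) :
    ∀ v ∈ LinearMap.ker ((K - α • (1 : Module.End ℂ V)) ^ n),
      T v ∈ LinearMap.ker ((K - α • (1 : Module.End ℂ V)) ^ n) :=
  stmt_3_general K T α lam n hker hcomm
end

section
/- Let (μ_n)_{n∈ℕ} be a sequence of pairwise distinct nonzero real numbers with |μ_n| → ∞ as n → ∞, and let (a_n)_{n∈ℕ} be complex numbers with ∑ₙ |a_n| < ∞. If ∑ₙ a_n·μ_n^{−p} = 0 for every integer p ≥ 0, then a_n = 0 for every n. -/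
/-!
Divide by the smallest `|μ_n|` among the indices with `a_n ≠ 0`: with `x_k = μ_n / μ_k` all
moments `∑ a_k x_k^p` still vanish and `|x_k| ≤ 1` on the support of `a`. Along `p ↦ 2p` the
combination `x^{2p} (1 + x)` tends to `2` at `x = 1` and to `0` at every other point of
`[-1, 1]`, so dominated convergence turns `∑ a_k x_k^{2p} (1 + x_k) = 0` into `2 a_n = 0`.
-/

open Filter Topology

lemma tendsto_pow_two_mul_mul_one_add {x : ℝ} (hx : |x| ≤ 1) :
    Tendsto (fun p : ℕ => x ^ (2 * p) * (1 + x)) atTop (𝓝 (if x = 1 then 2 else 0)) := by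
  rcases hx.lt_or_eq with hx | hx
  · have hx1 : x ≠ 1 := by rintro rfl; norm_num at hx
    have hsq : x ^ 2 < 1 := by nlinarith [abs_lt.mp hx]
    rw [if_neg hx1, ← zero_mul (1 + x)]
    simp_rw [pow_mul]
    exact (tendsto_pow_atTop_nhds_zero_of_lt_one (sq_nonneg x) hsq).mul_const _
  · rcases (abs_eq zero_le_one).mp hx with rfl | rfl <;> norm_num

lemma abs_pow_two_mul_mul_one_add_le {y : ℝ} (hy : |y| ≤ 1) (p : ℕ) :
    |y ^ (2 * p) * (1 + y)| ≤ 2 := by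
  rw [abs_mul, abs_pow]
  have h1 : |1 + y| ≤ 2 := by linarith [abs_add_le 1 y, abs_one (α := ℝ)]
  calc |y| ^ (2 * p) * |1 + y| ≤ 1 * 2 := by gcongr; exact pow_le_one₀ (abs_nonneg y) hy
    _ = 2 := one_mul 2

section Moments

variable {ι : Type*} {a : ι → ℂ} {x : ι → ℝ}

lemma norm_mul_ofReal_le_of_abs_le (hle : ∀ k, a k ≠ 0 → |x k| ≤ 1) {f : ℝ → ℝ} {c : ℝ}
    (hf : ∀ y, |y| ≤ 1 → |f y| ≤ c) (k : ι) :
    ‖a k * (f (x k) : ℂ)‖ ≤ c * ‖a k‖ := by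
  by_cases hak : a k = 0
  · simp [hak]
  · rw [norm_mul, Complex.norm_real, Real.norm_eq_abs, mul_comm]
    exact mul_le_mul_of_nonneg_right (hf _ (hle k hak)) (norm_nonneg _)

theorem eq_zero_of_tsum_mul_pow_eq_zero (hx : Function.Injective x)
    (hsum : Summable fun k => ‖a k‖) (hle : ∀ k, a k ≠ 0 → |x k| ≤ 1)
    (hmom : ∀ p : ℕ, ∑' k, a k * (x k : ℂ) ^ p = 0) {k₀ : ι} (hk₀ : x k₀ = 1) :
    a k₀ = 0 := by
  have hsummable (p : ℕ) : Summable fun k => a k * (x k : ℂ) ^ p := by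
    refine Summable.of_norm_bounded hsum fun k => ?_
    have := norm_mul_ofReal_le_of_abs_le hle (f := (· ^ p)) (c := 1)
      (fun y hy => by simpa [abs_pow] using pow_le_one₀ (abs_nonneg y) hy) k
    rw [one_mul] at this
    simpa using this
  have hsplit (p : ℕ) (k : ι) : a k * ((x k ^ (2 * p) * (1 + x k) : ℝ) : ℂ)
      = a k * (x k : ℂ) ^ (2 * p) + a k * (x k : ℂ) ^ (2 * p + 1) := by
    push_cast; ring
  have hzero (p : ℕ) : ∑' k, a k * ((x k ^ (2 * p) * (1 + x k) : ℝ) : ℂ) = 0 := by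
    rw [tsum_congr (hsplit p), (hsummable _).tsum_add (hsummable _), hmom, hmom, add_zero]
  have hlim : Tendsto (fun p : ℕ => ∑' k, a k * ((x k ^ (2 * p) * (1 + x k) : ℝ) : ℂ)) atTop
      (𝓝 (∑' k, a k * ((if x k = 1 then 2 else 0 : ℝ) : ℂ))) := by
    refine tendsto_tsum_of_dominated_convergence (hsum.mul_left 2) (fun k => ?_)
      (Eventually.of_forall fun p k => norm_mul_ofReal_le_of_abs_le hle
        (f := fun y => y ^ (2 * p) * (1 + y)) (fun _ hy => abs_pow_two_mul_mul_one_add_le hy p) k)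
    by_cases hak : a k = 0
    · simp [hak]
    · exact ((Complex.continuous_ofReal.tendsto _).comp
        (tendsto_pow_two_mul_mul_one_add (hle k hak))).const_mul _
  have hvalue : ∑' k, a k * ((if x k = 1 then 2 else 0 : ℝ) : ℂ) = 2 * a k₀ := by
    rw [tsum_eq_single k₀ fun k hk => by simp [← hk₀, hx.ne hk], if_pos hk₀]
    push_cast; ring
  simp only [hzero, hvalue] at hlim
  simpa using (tendsto_nhds_unique tendsto_const_nhds hlim).symm

end Moments

/-- Vanishing-moments lemma: if `(μ_n)` are pairwise distinct nonzero reals with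
`|μ_n| → ∞`, `∑ |a_n| < ∞` and `∑ a_n μ_n^{-p} = 0` for all integers `p ≥ 0`,
then all `a_n` vanish. -/
theorem stmt_5 (μ : ℕ → ℝ) (a : ℕ → ℂ)
    (hinj : Function.Injective μ)
    (hne : ∀ n, μ n ≠ 0)
    (htend : Filter.Tendsto (fun n => |μ n|) Filter.atTop Filter.atTop)
    (hsum : Summable fun n => ‖a n‖)
    (hmom : ∀ p : ℕ, ∑' n, a n * (((μ n) ^ p : ℝ) : ℂ)⁻¹ = 0) :
    ∀ n, a n = 0 := by
  by_contra! ⟨n₀, hn₀⟩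
  obtain ⟨n, hn, hmin⟩ := (Nat.cofinite_eq_atTop ▸ htend).exists_within_forall_le
    (s := {k | a k ≠ 0}) ⟨n₀, hn₀⟩
  refine hn (eq_zero_of_tsum_mul_pow_eq_zero (x := fun k => μ n / μ k) ?_ hsum ?_ ?_
    (div_self (hne n)))
  · exact fun k j h => hinj (by simpa [div_eq_mul_inv, hne n] using h)
  · intro k hk
    rw [abs_div, div_le_one (abs_pos.2 (hne k))]
    exact hmin k hk
  · intro p
    have hscale (k : ℕ) : a k * ((μ n / μ k : ℝ) : ℂ) ^ p
        = (μ n : ℂ) ^ p * (a k * (((μ k) ^ p : ℝ) : ℂ)⁻¹) := by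
      push_cast; ring
    rw [tsum_congr hscale, tsum_mul_left, hmom, mul_zero]
end

section
/- Let L>0 be such that L/(2π) is not an integer. If φ:ℝ→ℂ is three times continuously differentiable and satisfies φ'''(x) + φ'(x) = 0 for all x∈[0,L], together with φ(0)=0, φ(L)=0 and φ'(0)=φ'(L), then φ(x)=0 for all x∈[0,L]. -/
/-!
Since `φ''' = -φ'`, the jet `(φ, φ', φ'')` solves a linear ODE with Lipschitz constant `1`, so by
Grönwall `φ` is determined by `b = φ'(0)` and `c = φ''(0)`: `φ x = b sin x + c (1 - cos x)`.
The two remaining boundary conditions then form a linear system in `(b, c)` with determinant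
`-2 (1 - cos L)`, which is nonzero exactly when `L ∉ 2πℤ`.
-/

open Set Real

variable {E : Type*}

section NormedSpace

variable [NormedAddCommGroup E] [NormedSpace ℝ E]

theorem ContDiff.hasDerivAt_iteratedDeriv {f : ℝ → E} {n : WithTop ℕ∞} (hf : ContDiff ℝ n f)
    {k : ℕ} (hk : k < n) (x : ℝ) :
    HasDerivAt (iteratedDeriv k f) (iteratedDeriv (k + 1) f x) x := by
  rw [iteratedDeriv_succ]
  exact (hf.differentiable_iteratedDeriv k hk x).hasDerivAt

theorem hasDerivAt_sin_smul_add_cos_smul_add (p q r : E) (x : ℝ) :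
    HasDerivAt (fun y => sin y • p + cos y • q + r) (cos x • p - sin x • q) x := by
  have h := (((hasDerivAt_sin x).smul_const p).add ((hasDerivAt_cos x).smul_const q)).add_const r
  exact h.congr_deriv (by rw [neg_smul, sub_eq_add_neg])

theorem eq_zero_of_third_order_ode {f f₁ f₂ : ℝ → E} {a b : ℝ}
    (hf : ∀ x ∈ Icc a b, HasDerivAt f (f₁ x) x)
    (hf₁ : ∀ x ∈ Icc a b, HasDerivAt f₁ (f₂ x) x)
    (hf₂ : ∀ x ∈ Icc a b, HasDerivAt f₂ (-f₁ x) x)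
    (ha : f a = 0) (ha₁ : f₁ a = 0) (ha₂ : f₂ a = 0) :
    ∀ x ∈ Icc a b, f x = 0 ∧ f₁ x = 0 := by
  let jet : ℝ → E × E × E := fun x => (f x, f₁ x, f₂ x)
  have hjet : ∀ x ∈ Icc a b, HasDerivAt jet (f₁ x, f₂ x, -f₁ x) x := fun x hx =>
    (hf x hx).prodMk ((hf₁ x hx).prodMk (hf₂ x hx))
  have hbound : ∀ x ∈ Ico a b, ‖(f₁ x, f₂ x, -f₁ x)‖ ≤ 1 * ‖jet x‖ := by
    intro x _
    simp only [jet, one_mul, Prod.norm_def, norm_neg]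
    exact max_le (le_max_of_le_right (le_max_left _ _))
      (max_le (le_max_of_le_right (le_max_right _ _)) (le_max_of_le_right (le_max_left _ _)))
  intro x hx
  have h := eq_zero_of_abs_deriv_le_mul_abs_self_of_eq_zero_right
    (fun y hy => (hjet y hy).continuousAt.continuousWithinAt)
    (fun y hy => (hjet y (Ico_subset_Icc_self hy)).hasDerivWithinAt)
    (by simp [jet, ha, ha₁, ha₂]) hbound x hx
  simp only [jet, Prod.mk_eq_zero] at h
  exact ⟨h.1, h.2.1⟩

theorem eq_sin_smul_add_one_sub_cos_smul_of_iteratedDeriv_three_add_deriv {f : ℝ → E} {L : ℝ}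
    (hf : ContDiff ℝ 3 f) (hode : ∀ x ∈ Icc 0 L, iteratedDeriv 3 f x + deriv f x = 0)
    (h0 : f 0 = 0) (x : ℝ) (hx : x ∈ Icc 0 L) :
    f x = sin x • deriv f 0 + (1 - cos x) • iteratedDeriv 2 f 0 ∧
      deriv f x = cos x • deriv f 0 + sin x • iteratedDeriv 2 f 0 := by
  set b := deriv f 0
  set c := iteratedDeriv 2 f 0
  have hD₀ : ∀ y, HasDerivAt f (deriv f y) y := by
    simpa using hf.hasDerivAt_iteratedDeriv (k := 0) (by norm_num)
  have hD₁ : ∀ y, HasDerivAt (deriv f) (iteratedDeriv 2 f y) y := by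
    simpa using hf.hasDerivAt_iteratedDeriv (k := 1) (by norm_num)
  have hD₂ : ∀ y, HasDerivAt (iteratedDeriv 2 f) (iteratedDeriv 3 f y) y :=
    hf.hasDerivAt_iteratedDeriv (k := 2) (by norm_num)
  have h := eq_zero_of_third_order_ode (a := 0) (b := L)
    (f := fun y => f y - (sin y • b + cos y • (-c) + c))
    (f₁ := fun y => deriv f y - (sin y • c + cos y • b + 0))
    (f₂ := fun y => iteratedDeriv 2 f y - (sin y • (-b) + cos y • c + 0))
    (fun y _ => ?_) (fun y _ => ?_) (fun y hy => ?_) (by simp [h0]) (by simp [b]) (by simp [c]) x hx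
  · simp only [sub_eq_zero] at h
    refine ⟨?_, by rw [h.2]; module⟩
    rw [h.1]; module
  · exact ((hD₀ y).sub (hasDerivAt_sin_smul_add_cos_smul_add b (-c) c y)).congr_deriv (by module)
  · exact ((hD₁ y).sub (hasDerivAt_sin_smul_add_cos_smul_add c b 0 y)).congr_deriv (by module)
  · exact ((hD₂ y).sub (hasDerivAt_sin_smul_add_cos_smul_add (-b) c 0 y)).congr_deriv
      (by linear_combination (norm := module) hode y hy)

end NormedSpace

theorem eq_zero_of_sin_smul_add_one_sub_cos_smul [AddCommGroup E] [Module ℝ E] {L : ℝ}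
    (hL : cos L ≠ 1) {b c : E} (h₁ : sin L • b + (1 - cos L) • c = 0)
    (h₂ : cos L • b + sin L • c = b) : b = 0 ∧ c = 0 := by
  have hT : 1 - cos L ≠ 0 := sub_ne_zero.mpr hL.symm
  have hb : (2 * (1 - cos L)) • b = 0 := by
    linear_combination (norm := module) sin L • h₁ - (1 - cos L) • h₂ - sin_sq_add_cos_sq L • b
  have hb0 : b = 0 := (smul_eq_zero.mp hb).resolve_left (mul_ne_zero two_ne_zero hT)
  refine ⟨hb0, (smul_eq_zero.mp ?_).resolve_left hT⟩
  simpa [hb0] using h₁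

/-- If `L/(2π)` is not an integer, then `0` is not an eigenvalue of
`A φ = -φ''' - φ'` with boundary conditions `φ(0)=φ(L)=0`, `φ'(0)=φ'(L)`. -/
theorem stmt_6 (L : ℝ) (hL : 0 < L)
    (hLnot : ¬ ∃ k : ℤ, L / (2 * Real.pi) = (k : ℝ))
    (φ : ℝ → ℂ) (hreg : ContDiff ℝ 3 φ)
    (heq : ∀ x ∈ Set.Icc (0 : ℝ) L, iteratedDeriv 3 φ x + deriv φ x = 0)
    (h0 : φ 0 = 0) (hLval : φ L = 0) (hder : deriv φ 0 = deriv φ L) :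
    ∀ x ∈ Set.Icc (0 : ℝ) L, φ x = 0 := by
  have hcos : cos L ≠ 1 := by
    intro hL1
    obtain ⟨k, hk⟩ := (cos_eq_one_iff L).mp hL1
    exact hLnot ⟨k, by rw [← hk]; field_simp⟩
  have hsol := eq_sin_smul_add_one_sub_cos_smul_of_iteratedDeriv_three_add_deriv hreg heq h0
  obtain ⟨hφL, hφ'L⟩ := hsol L ⟨hL.le, le_rfl⟩
  obtain ⟨hb, hc⟩ := eq_zero_of_sin_smul_add_one_sub_cos_smul hcos (hLval ▸ hφL).symm
    (hφ'L ▸ hder).symm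
  intro x hx
  simp [(hsol x hx).1, hb, hc]
end

section
/- Let λ>0, C ≥ 0 and T>0. Let y:ℝ→ℝ be differentiable on [0,T] with y(t) ≥ 0 for all t∈[0,T], and suppose y'(t) ≤ −2λ·y(t) + C·y(t)^{3/2} for all t∈[0,T]. If C·√(y(0)) ≤ λ, then y(t) ≤ e^{−λt}·y(0) for all t∈[0,T]. -/
/-!
Wherever `y ≤ M`, the inequality gives `y' ≤ -(2λ - C √M) y`. With `μ = 2λ - C √(y 0 + ε)`, the
function `B t = exp (-μ t) y(0) + ε` stays below `y 0 + ε`, so at a point where `y` touches `B`,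
`y' ≤ -μ B < B'`: `y` can never cross `B`. Letting `ε → 0` gives
`y t ≤ exp (-(2λ - C √(y 0)) t) y(0)`, and `C √(y 0) ≤ λ` makes the rate at least `λ`.
-/

open Real Set Filter Topology

lemma neg_two_mul_add_mul_sqrt_le {lam C s M : ℝ} (hC : 0 ≤ C) (hs : 0 ≤ s) (hsM : s ≤ M) :
    -2 * lam * s + C * (s * √s) ≤ -(2 * lam - C * √M) * s := by
  have hsqrt : C * √s ≤ C * √M := mul_le_mul_of_nonneg_left (sqrt_le_sqrt hsM) hC
  nlinarith [mul_le_mul_of_nonneg_right hsqrt hs]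

section DifferentialInequality

variable {lam C T : ℝ} {y : ℝ → ℝ}

lemma le_exp_mul_add_of_deriv_le (hC : 0 ≤ C)
    (hdiff : ∀ t ∈ Icc 0 T, DifferentiableAt ℝ y t) (hy0 : 0 ≤ y 0)
    (hineq : ∀ t ∈ Icc 0 T, deriv y t ≤ -2 * lam * y t + C * (y t * √(y t)))
    {ε : ℝ} (hε : 0 < ε) (hμ : C * √(y 0 + ε) < 2 * lam) :
    ∀ t ∈ Icc 0 T, y t ≤ exp (-(2 * lam - C * √(y 0 + ε)) * t) * y 0 + ε := by
  intro t ht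
  set μ := 2 * lam - C * √(y 0 + ε)
  have hμ0 : 0 < μ := sub_pos.mpr hμ
  have hB (x : ℝ) : HasDerivAt (fun x => exp (-μ * x) * y 0 + ε) (exp (-μ * x) * -μ * y 0) x := by
    simpa using (((hasDerivAt_id x).const_mul (-μ)).exp.mul_const (y 0)).add_const ε
  refine image_le_of_deriv_right_lt_deriv_boundary
    (fun x hx => (hdiff x hx).continuousAt.continuousWithinAt)
    (fun x hx => (hdiff x (Ico_subset_Icc_self hx)).hasDerivAt.hasDerivWithinAt)
    (by simp [hε.le]) hB (fun x hx hyx => ?_) ht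
  have hu0 : 0 ≤ exp (-μ * x) * y 0 := by positivity
  have huy : exp (-μ * x) * y 0 ≤ y 0 :=
    mul_le_of_le_one_left hy0 (exp_le_one_iff.mpr (by nlinarith [hx.1]))
  calc deriv y x ≤ -2 * lam * y x + C * (y x * √(y x)) := hineq x (Ico_subset_Icc_self hx)
    _ ≤ -μ * y x := neg_two_mul_add_mul_sqrt_le hC (by rw [hyx]; positivity) (by rw [hyx]; linarith)
    _ < exp (-μ * x) * -μ * y 0 := by rw [hyx]; nlinarith

lemma le_exp_mul_of_deriv_le (hC : 0 ≤ C)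
    (hdiff : ∀ t ∈ Icc 0 T, DifferentiableAt ℝ y t) (hy0 : 0 ≤ y 0)
    (hineq : ∀ t ∈ Icc 0 T, deriv y t ≤ -2 * lam * y t + C * (y t * √(y t)))
    (hμ : C * √(y 0) < 2 * lam) :
    ∀ t ∈ Icc 0 T, y t ≤ exp (-(2 * lam - C * √(y 0)) * t) * y 0 := by
  intro t ht
  have hcont : Continuous fun ε => exp (-(2 * lam - C * √(y 0 + ε)) * t) * y 0 + ε := by
    fun_prop
  have hlim := hcont.continuousWithinAt (s := Ioi 0) (x := 0) |>.tendsto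
  simp only [add_zero] at hlim
  have hsmall : ∀ᶠ ε in 𝓝[>] 0, C * √(y 0 + ε) < 2 * lam := by
    refine nhdsWithin_le_nhds (ContinuousAt.eventually_lt (by fun_prop) (by fun_prop) ?_)
    simpa using hμ
  refine ge_of_tendsto hlim ?_
  filter_upwards [self_mem_nhdsWithin, hsmall] with ε hε hεμ
  exact le_exp_mul_add_of_deriv_le hC hdiff hy0 hineq hε hεμ t ht

end DifferentialInequality

theorem stmt_9_general (lam C T : ℝ) (hlam : 0 < lam) (hC : 0 ≤ C)
    (y : ℝ → ℝ)
    (hdiff : ∀ t ∈ Set.Icc (0 : ℝ) T, DifferentiableAt ℝ y t)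
    (hpos : ∀ t ∈ Set.Icc (0 : ℝ) T, 0 ≤ y t)
    (hineq : ∀ t ∈ Set.Icc (0 : ℝ) T,
      deriv y t ≤ -2 * lam * y t + C * (y t * Real.sqrt (y t)))
    (hinit : C * Real.sqrt (y 0) ≤ lam) :
    ∀ t ∈ Set.Icc (0 : ℝ) T, y t ≤ Real.exp (-lam * t) * y 0 := by
  intro t ht
  have hy0 : 0 ≤ y 0 := hpos 0 ⟨le_rfl, ht.1.trans ht.2⟩
  calc y t ≤ exp (-(2 * lam - C * √(y 0)) * t) * y 0 :=
        le_exp_mul_of_deriv_le hC hdiff hy0 hineq (by linarith) t ht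
    _ ≤ exp (-lam * t) * y 0 := by gcongr; all_goals linarith [ht.1]

/-- Lyapunov differential inequality: if `y ≥ 0`, `y' ≤ -2λ y + C y^{3/2}` on `[0,T]`
and `C √(y 0) ≤ λ`, then `y t ≤ e^{-λ t} y 0` on `[0,T]`. -/
theorem stmt_9 (lam C T : ℝ) (hlam : 0 < lam) (hC : 0 ≤ C) (hT : 0 < T)
    (y : ℝ → ℝ)
    (hdiff : ∀ t ∈ Set.Icc (0 : ℝ) T, DifferentiableAt ℝ y t)
    (hpos : ∀ t ∈ Set.Icc (0 : ℝ) T, 0 ≤ y t)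
    (hineq : ∀ t ∈ Set.Icc (0 : ℝ) T,
      deriv y t ≤ -2 * lam * y t + C * (y t * Real.sqrt (y t)))
    (hinit : C * Real.sqrt (y 0) ≤ lam) :
    ∀ t ∈ Set.Icc (0 : ℝ) T, y t ≤ Real.exp (-lam * t) * y 0 :=
  stmt_9_general lam C T hlam hC y hdiff hpos hineq hinit
end

section
/- There exists a constant C>0 such that for every nonzero integer j, ∑_{k∈ℤ, k≠0, k≠j} k²/((k³−j³)²·j²) ≤ C/j⁴. -/
/-! Since k³ − j³ = (k − j)(k² + kj + j²) and (k² + kj + j²)² ≥ (9/16) k² j², each term is at most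
(16/9) j⁻⁴ (k − j)⁻², and the shifted series ∑ (k − j)⁻² is dominated by ∑ m⁻². -/

lemma sq_mul_sq_le_sq_add_mul_add_sq (x y : ℝ) :
    9 / 16 * (x * y) ^ 2 ≤ (x ^ 2 + x * y + y ^ 2) ^ 2 := by
  have hx : 3 / 4 * x ^ 2 ≤ x ^ 2 + x * y + y ^ 2 := by nlinarith [sq_nonneg (x + 2 * y)]
  have hy : 3 / 4 * y ^ 2 ≤ x ^ 2 + x * y + y ^ 2 := by nlinarith [sq_nonneg (2 * x + y)]
  calc 9 / 16 * (x * y) ^ 2 = (3 / 4 * x ^ 2) * (3 / 4 * y ^ 2) := by ring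
    _ ≤ (x ^ 2 + x * y + y ^ 2) * (x ^ 2 + x * y + y ^ 2) :=
        mul_le_mul hx hy (by positivity) ((by positivity : (0 : ℝ) ≤ 3 / 4 * x ^ 2).trans hx)
    _ = (x ^ 2 + x * y + y ^ 2) ^ 2 := (sq _).symm

lemma sq_div_sq_cube_sub_cube_le {x y : ℝ} (hy : y ≠ 0) (hxy : x ≠ y) :
    x ^ 2 / ((x ^ 3 - y ^ 3) ^ 2 * y ^ 2) ≤ 16 / 9 / y ^ 4 * (1 / (x - y) ^ 2) := by
  have hxy' : x - y ≠ 0 := sub_ne_zero.mpr hxy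
  have hq : 0 < x ^ 2 + x * y + y ^ 2 := by nlinarith [sq_nonneg (2 * x + y), sq_pos_of_ne_zero hy]
  have hcube : x ^ 3 - y ^ 3 = (x - y) * (x ^ 2 + x * y + y ^ 2) := by ring
  rw [hcube, div_mul_div_comm, mul_one, div_le_div_iff₀ (by positivity) (by positivity)]
  nlinarith [mul_le_mul_of_nonneg_left (sq_mul_sq_le_sq_add_mul_add_sq x y)
    (by positivity : (0 : ℝ) ≤ 16 * (x - y) ^ 2 * y ^ 2)]

lemma summable_one_div_sq_int_sub (j : ℤ) :
    Summable (fun k : ℤ => 1 / ((k : ℝ) - j) ^ 2) := by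
  simpa only [Function.comp_def, Equiv.subRight_apply, Int.cast_sub] using
    (Real.summable_one_div_int_pow.mpr one_lt_two).comp_injective (Equiv.subRight j).injective

lemma tsum_subtype_one_div_sq_int_sub_le (p : ℤ → Prop) (j : ℤ) :
    ∑' k : {k : ℤ // p k}, 1 / (((k : ℤ) : ℝ) - j) ^ 2 ≤ ∑' m : ℤ, 1 / (m : ℝ) ^ 2 :=
  calc ∑' k : {k : ℤ // p k}, 1 / (((k : ℤ) : ℝ) - j) ^ 2
      ≤ ∑' k : ℤ, 1 / ((k : ℝ) - j) ^ 2 :=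
        (summable_one_div_sq_int_sub j).tsum_subtype_le _ {k | p k} (fun _ => by positivity)
    _ = ∑' m : ℤ, 1 / (m : ℝ) ^ 2 := by
        simpa only [Equiv.subRight_apply, Int.cast_sub] using
          (Equiv.subRight j).tsum_eq (fun m : ℤ => 1 / (m : ℝ) ^ 2)

/-- There is `C > 0` such that for every nonzero integer `j`,
`∑_{k ≠ 0, k ≠ j} k² / ((k³ - j³)² j²) ≤ C / j⁴`. -/
theorem stmt_10 :
    ∃ C : ℝ, 0 < C ∧ ∀ j : ℤ, j ≠ 0 →
      (∑' k : {k : ℤ // k ≠ 0 ∧ k ≠ j},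
          ((k : ℤ) : ℝ) ^ 2 / ((((k : ℤ) : ℝ) ^ 3 - (j : ℝ) ^ 3) ^ 2 * (j : ℝ) ^ 2))
        ≤ C / (j : ℝ) ^ 4 := by
  set T : ℝ := ∑' m : ℤ, 1 / (m : ℝ) ^ 2
  have hT : 0 < T := (Real.summable_one_div_int_pow.mpr one_lt_two).tsum_pos
    (fun _ => by positivity) 1 (by norm_num)
  refine ⟨16 / 9 * T, by positivity, fun j hj => ?_⟩
  set g : {k : ℤ // k ≠ 0 ∧ k ≠ j} → ℝ := fun k => 16 / 9 / (j : ℝ) ^ 4 * (1 / ((k : ℝ) - j) ^ 2)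
  have hbound : ∀ k, _ ≤ g k := fun k =>
    sq_div_sq_cube_sub_cube_le (Int.cast_ne_zero.mpr hj) (Int.cast_injective.ne k.2.2)
  have hg : Summable g := ((summable_one_div_sq_int_sub j).subtype _).mul_left _
  calc _ ≤ ∑' k, g k := (hg.of_nonneg_of_le (fun _ => by positivity) hbound).tsum_le_tsum hbound hg
    _ = 16 / 9 / (j : ℝ) ^ 4 * ∑' k : {k : ℤ // k ≠ 0 ∧ k ≠ j}, 1 / ((k : ℝ) - j) ^ 2 :=
        tsum_mul_left
    _ ≤ 16 / 9 / (j : ℝ) ^ 4 * T := by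
        gcongr; exact tsum_subtype_one_div_sq_int_sub_le _ j
    _ = 16 / 9 * T / (j : ℝ) ^ 4 := by ring
end

section
/- For every integer j ≥ 1, ∑_{k=j+1}^{2j} k²/((k³−j³)²·j²) ≤ 8π²/(27·j⁴). -/
/-!
Write `k = j + l` with `1 ≤ l ≤ j`. Since `(j + l)³ - j³ = 3jl(j + l) + l³ ≥ 3jl(j + l)`, the term
with index `k` is at most `1 / (9 l² j⁴)`, so the sum is at most `ζ(2) / (9 j⁴) = π² / (54 j⁴)`.
-/

open Finset

theorem sum_Icc_succ_two_mul_eq {M : Type*} [AddCommMonoid M] (f : ℕ → M) (j : ℕ) :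
    ∑ k ∈ Icc (j + 1) (2 * j), f k = ∑ l ∈ Icc 1 j, f (l + j) := by
  rw [two_mul, add_comm j 1, ← map_add_right_Icc, sum_map]
  rfl

theorem three_mul_mul_add_le_add_pow_three_sub_pow_three {R : Type*} [CommRing R] [LinearOrder R]
    [IsStrictOrderedRing R] {j l : R} (hl : 0 ≤ l) :
    3 * j * l * (j + l) ≤ (j + l) ^ 3 - j ^ 3 := by
  have hcube : (j + l) ^ 3 - j ^ 3 = 3 * j * l * (j + l) + l ^ 3 := by ring
  rw [hcube]
  exact le_add_of_nonneg_right (pow_nonneg hl 3)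

theorem sq_div_add_pow_three_sub_pow_three_le {K : Type*} [Field K] [LinearOrder K]
    [IsStrictOrderedRing K] {j l : K} (hj : 0 < j) (hl : 0 < l) :
    (j + l) ^ 2 / (((j + l) ^ 3 - j ^ 3) ^ 2 * j ^ 2) ≤ 1 / l ^ 2 / (9 * j ^ 4) := by
  have hlower : 0 ≤ 3 * j * l * (j + l) := by positivity
  have hcube := three_mul_mul_add_le_add_pow_three_sub_pow_three (j := j) hl.le
  calc (j + l) ^ 2 / (((j + l) ^ 3 - j ^ 3) ^ 2 * j ^ 2)
      ≤ (j + l) ^ 2 / ((3 * j * l * (j + l)) ^ 2 * j ^ 2) := by gcongr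
    _ = 1 / l ^ 2 / (9 * j ^ 4) := by field_simp; ring

theorem sum_one_div_sq_le_pi_sq_div_six (s : Finset ℕ) :
    ∑ l ∈ s, 1 / (l : ℝ) ^ 2 ≤ Real.pi ^ 2 / 6 :=
  sum_le_hasSum s (fun _ _ => by positivity) hasSum_zeta_two

/-- For every integer `j ≥ 1`, `∑_{j < k ≤ 2j} k² / ((k³ - j³)² j²) ≤ 8π²/(27 j⁴)`. -/
theorem stmt_12 (j : ℕ) (hj : 1 ≤ j) :
    (∑ k ∈ Finset.Icc (j + 1) (2 * j),
        (k : ℝ) ^ 2 / (((k : ℝ) ^ 3 - (j : ℝ) ^ 3) ^ 2 * (j : ℝ) ^ 2))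
      ≤ 8 * Real.pi ^ 2 / (27 * (j : ℝ) ^ 4) := by
  have hj0 : (0 : ℝ) < j := by exact_mod_cast hj
  rw [sum_Icc_succ_two_mul_eq (fun k => (k : ℝ) ^ 2 / (((k : ℝ) ^ 3 - (j : ℝ) ^ 3) ^ 2 * (j : ℝ) ^ 2))]
  calc ∑ l ∈ Icc 1 j, ((l + j : ℕ) : ℝ) ^ 2 / ((((l + j : ℕ) : ℝ) ^ 3 - (j : ℝ) ^ 3) ^ 2 * (j : ℝ) ^ 2)
      ≤ ∑ l ∈ Icc 1 j, 1 / (l : ℝ) ^ 2 / (9 * (j : ℝ) ^ 4) := by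
        refine sum_le_sum fun l hl => ?_
        have hl0 : (0 : ℝ) < l := by exact_mod_cast (mem_Icc.mp hl).1
        rw [Nat.cast_add, add_comm (l : ℝ)]
        exact sq_div_add_pow_three_sub_pow_three_le hj0 hl0
    _ = (∑ l ∈ Icc 1 j, 1 / (l : ℝ) ^ 2) / (9 * (j : ℝ) ^ 4) := (sum_div ..).symm
    _ ≤ Real.pi ^ 2 / 6 / (9 * (j : ℝ) ^ 4) := by
        gcongr
        exact sum_one_div_sq_le_pi_sq_div_six _
    _ ≤ 8 * Real.pi ^ 2 / (27 * (j : ℝ) ^ 4) := by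
        rw [div_div, div_le_div_iff₀ (by positivity) (by positivity)]
        nlinarith [pow_pos hj0 4, sq_nonneg Real.pi]
end

section
/- For every integer j ≥ 1, ∑_{k∈ℤ, −j<k<j, k≠0} k²/((k³−j³)²·j²) ≤ 8π²/(27·j⁴). -/
open Real

/-! Factor `k³ - j³ = (k - j)(k² + kj + j²)`. Since `|kj| ≤ k² + kj + j²`, the `k`-th term is at
most `1 / ((j - k)² j⁴)`, and the values `j - k` are distinct positive integers, so the sum is at most
`ζ(2) / j⁴ = π² / (6 j⁴) ≤ 8π² / (27 j⁴)`. -/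

lemma mul_sq_le_sq_add_mul_add_sq (x y : ℝ) : (x * y) ^ 2 ≤ (x ^ 2 + x * y + y ^ 2) ^ 2 :=
  sq_le_sq' (by nlinarith [sq_nonneg (x + y)]) (by nlinarith [sq_nonneg x, sq_nonneg y])

/-- At `y = 0` or `x = y` both sides are `0` by the convention `a / 0 = 0`. -/
lemma sq_div_cube_sub_cube_sq_mul_sq_le (x y : ℝ) :
    x ^ 2 / ((x ^ 3 - y ^ 3) ^ 2 * y ^ 2) ≤ 1 / (y - x) ^ 2 / y ^ 4 := by
  rcases eq_or_ne y 0 with rfl | hy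
  · simp
  rcases eq_or_ne x y with rfl | hxy
  · simp
  have hsub : y - x ≠ 0 := sub_ne_zero.2 hxy.symm
  have hfactor : (x ^ 3 - y ^ 3) ^ 2 = (y - x) ^ 2 * (x ^ 2 + x * y + y ^ 2) ^ 2 := by ring
  have hq : 0 < x ^ 2 + x * y + y ^ 2 := by nlinarith [sq_nonneg (2 * x + y), sq_pos_of_ne_zero hy]
  rw [hfactor, div_div, div_le_div_iff₀ (by positivity) (by positivity)]
  have hmul := mul_le_mul_of_nonneg_left (mul_sq_le_sq_add_mul_add_sq x y)
    (by positivity : 0 ≤ (y - x) ^ 2 * y ^ 2)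
  nlinarith [hmul]

lemma sum_one_div_sub_sq_le (s : Finset ℤ) (n : ℤ) (hs : ∀ k ∈ s, k < n) :
    ∑ k ∈ s, 1 / ((n : ℝ) - k) ^ 2 ≤ π ^ 2 / 6 := by
  have hinj : Set.InjOn (fun k : ℤ => (n - k).toNat) s := by
    intro a ha b hb hab
    have := hs a ha; have := hs b hb
    simp only at hab
    omega
  calc ∑ k ∈ s, 1 / ((n : ℝ) - k) ^ 2
      = ∑ m ∈ s.image (fun k : ℤ => (n - k).toNat), 1 / (m : ℝ) ^ 2 := by
        rw [Finset.sum_image hinj]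
        refine Finset.sum_congr rfl fun k hk => ?_
        have : (((n - k).toNat : ℤ) : ℝ) = n - k := by
          rw [Int.toNat_of_nonneg (by linarith [hs k hk])]; push_cast; ring
        rw [← this, Int.cast_natCast]
    _ ≤ π ^ 2 / 6 := sum_le_hasSum _ (fun _ _ => by positivity) hasSum_zeta_two

theorem stmt_14_general (j : ℕ) :
    (∑ k ∈ (Finset.Ioo (-(j : ℤ)) (j : ℤ)).erase 0,
        ((k : ℤ) : ℝ) ^ 2 / ((((k : ℤ) : ℝ) ^ 3 - (j : ℝ) ^ 3) ^ 2 * (j : ℝ) ^ 2))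
      ≤ 8 * Real.pi ^ 2 / (27 * (j : ℝ) ^ 4) := by
  calc _ ≤ ∑ k ∈ (Finset.Ioo (-(j : ℤ)) (j : ℤ)).erase 0, 1 / ((j : ℝ) - k) ^ 2 / (j : ℝ) ^ 4 :=
        Finset.sum_le_sum fun k _ => sq_div_cube_sub_cube_sq_mul_sq_le k j
    _ = (∑ k ∈ (Finset.Ioo (-(j : ℤ)) (j : ℤ)).erase 0, 1 / (((j : ℤ) : ℝ) - k) ^ 2) / (j : ℝ) ^ 4 := by
        rw [Finset.sum_div]; norm_cast
    _ ≤ (π ^ 2 / 6) / (j : ℝ) ^ 4 := by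
        gcongr
        exact sum_one_div_sub_sq_le _ _ fun k hk => (Finset.mem_Ioo.1 (Finset.mem_of_mem_erase hk)).2
    _ ≤ 8 * π ^ 2 / (27 * (j : ℝ) ^ 4) := by
        rw [← div_div]
        exact div_le_div_of_nonneg_right (by nlinarith [sq_nonneg π]) (by positivity)

/-- For every integer `j ≥ 1`,
`∑_{-j < k < j, k ≠ 0} k² / ((k³ - j³)² j²) ≤ 8π²/(27 j⁴)`. -/
theorem stmt_14 (j : ℕ) (hj : 1 ≤ j) :
    (∑ k ∈ (Finset.Ioo (-(j : ℤ)) (j : ℤ)).erase 0,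
        ((k : ℤ) : ℝ) ^ 2 / ((((k : ℤ) : ℝ) ^ 3 - (j : ℝ) ^ 3) ^ 2 * (j : ℝ) ^ 2))
      ≤ 8 * Real.pi ^ 2 / (27 * (j : ℝ) ^ 4) :=
  stmt_14_general j
end

section
/- For every integer j ≥ 1, ∑_{k=2j+1}^{∞} 1/(k³−j³) ≤ 2/(7·j²). -/
/-!
For `k > 2j` we have `j³ ≤ k³/8`, so `1/(k³ - j³) ≤ (8/7)/k³`. The tail `∑_{k ≥ m} 1/k³` is at most
`1/(2(m-1)m)`, because `1/k³ ≤ 1/((k-1)k(k+1))` and the latter telescopes as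
`(1/((k-1)k) - 1/(k(k+1)))/2`. With `m = 2j+1` this gives `(8/7)/(4j(2j+1)) ≤ 2/(7j²)`.
-/

open Finset

theorem tsum_subtype_le_eq_tsum_add {α : Type*} [AddCommMonoid α] [TopologicalSpace α]
    (m : ℕ) (f : ℕ → α) : ∑' k : {k : ℕ // m ≤ k}, f k = ∑' n : ℕ, f (n + m) :=
  let e : ℕ ≃ {k : ℕ // m ≤ k} :=
    { toFun := fun n => ⟨n + m, Nat.le_add_left m n⟩
      invFun := fun k => k - m
      left_inv := fun n => Nat.add_sub_cancel n m
      right_inv := fun k => Subtype.ext (Nat.sub_add_cancel k.2) }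
  (e.tsum_eq _).symm

theorem seven_eighths_mul_cube_le_cube_sub_cube {a b : ℝ} (ha : 0 ≤ a) (hab : 2 * a ≤ b) :
    7 / 8 * b ^ 3 ≤ b ^ 3 - a ^ 3 := by
  have : (2 * a) ^ 3 ≤ b ^ 3 := pow_le_pow_left₀ (by positivity) hab 3
  linarith

theorem one_div_cube_sub_cube_le {a b : ℝ} (ha : 0 ≤ a) (hab : 2 * a ≤ b) :
    1 / (b ^ 3 - a ^ 3) ≤ 8 / 7 * (1 / b ^ 3) := by
  rcases (show 0 ≤ b by linarith).eq_or_lt with rfl | hb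
  · simp [show a = 0 by linarith]
  calc 1 / (b ^ 3 - a ^ 3) ≤ 1 / (7 / 8 * b ^ 3) :=
        one_div_le_one_div_of_le (by positivity) (seven_eighths_mul_cube_le_cube_sub_cube ha hab)
    _ = 8 / 7 * (1 / b ^ 3) := by field_simp

theorem one_div_cube_le_half_sub {x : ℝ} (hx : 1 < x) :
    1 / x ^ 3 ≤ (1 / ((x - 1) * x) - 1 / (x * (x + 1))) / 2 := by
  have hx0 : 0 < x - 1 := sub_pos.2 hx
  have key : (1 / ((x - 1) * x) - 1 / (x * (x + 1))) / 2 = 1 / ((x - 1) * x * (x + 1)) := by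
    field_simp
    ring
  rw [key, one_div_le_one_div (by positivity) (by positivity)]
  nlinarith

theorem sum_range_one_div_add_cube_le {m : ℝ} (hm : 1 < m) (N : ℕ) :
    ∑ n ∈ range N, 1 / ((n + m) ^ 3) ≤ 1 / (2 * ((m - 1) * m)) := by
  set g : ℕ → ℝ := fun n => 1 / ((n + m - 1) * (n + m))
  have hm_le : ∀ n : ℕ, m ≤ n + m := fun n => le_add_of_nonneg_left n.cast_nonneg
  calc ∑ n ∈ range N, 1 / ((n + m) ^ 3) ≤ ∑ n ∈ range N, (g n - g (n + 1)) / 2 := by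
        refine sum_le_sum fun n _ => ?_
        refine (one_div_cube_le_half_sub (hm.trans_le (hm_le n))).trans_eq ?_
        simp only [g]
        push_cast
        ring
    _ = (g 0 - g N) / 2 := by rw [← sum_div, sum_range_sub']
    _ ≤ 1 / (2 * ((m - 1) * m)) := by
        have hgN : 0 ≤ g N := by
          have : 0 < (N : ℝ) + m - 1 := by linarith [hm_le N]
          positivity
        have hg0 : g 0 / 2 = 1 / (2 * ((m - 1) * m)) := by
          simp only [g, CharP.cast_eq_zero, zero_add, div_div, mul_comm]
        linarith

/-- For every integer `j ≥ 1`, `∑_{k > 2j} 1 / (k³ - j³) ≤ 2 / (7 j²)`. -/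
theorem stmt_15 (j : ℕ) (hj : 1 ≤ j) :
    (∑' k : {k : ℕ // 2 * j + 1 ≤ k}, 1 / (((k : ℕ) : ℝ) ^ 3 - (j : ℝ) ^ 3))
      ≤ 2 / (7 * (j : ℝ) ^ 2) := by
  have hj' : (1 : ℝ) ≤ j := by exact_mod_cast hj
  have hk : ∀ n : ℕ, 2 * (j : ℝ) ≤ n + (2 * j + 1) := fun n => by linarith [n.cast_nonneg (α := ℝ)]
  rw [tsum_subtype_le_eq_tsum_add (2 * j + 1) fun k : ℕ => 1 / ((k : ℝ) ^ 3 - (j : ℝ) ^ 3)]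
  push_cast
  refine Real.tsum_le_of_sum_range_le (fun n => ?_) fun N => ?_
  · exact one_div_nonneg.2 <| sub_nonneg.2 <| pow_le_pow_left₀ j.cast_nonneg (by linarith [hk n]) 3
  calc ∑ n ∈ range N, 1 / ((n + (2 * j + 1) : ℝ) ^ 3 - (j : ℝ) ^ 3)
      ≤ ∑ n ∈ range N, (8 / 7 : ℝ) * (1 / ((n + (2 * j + 1 : ℝ)) ^ 3)) :=
        sum_le_sum fun n _ => one_div_cube_sub_cube_le j.cast_nonneg (hk n)
    _ ≤ (8 / 7 : ℝ) * (1 / (2 * ((2 * j + 1 - 1) * (2 * j + 1)))) := by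
        rw [← mul_sum]
        gcongr
        exact sum_range_one_div_add_cube_le (by linarith) N
    _ ≤ 2 / (7 * (j : ℝ) ^ 2) := by
        rw [add_sub_cancel_right, mul_one_div, div_div, div_le_div_iff₀ (by positivity) (by positivity)]
        nlinarith
end

section
/- There exists a constant C>0 such that for every integer j ≥ 2, ∑_{k∈ℤ, k≠0, k≠j} 1/|j³−k³| ≤ C·(log j)/j². -/
/-!
Put `m = j - k`. Since `j³ - k³ = m (j² + jk + k²)` and `j² + jk + k²` dominates `(j² + m²) / 8`,
the terms are at most `8 / (|m| (j² + m²))`. This majorant is even in `m`, so it suffices to bound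
`∑_{n ≥ 1} 1 / (n (j² + n²))`: for `n ≤ j` the terms are at most `1 / (n j²)`, which add up to
`H_j / j² ≤ (1 + log j) / j²`, and for `n > j` they are at most `1 / (2 j n²)`, which add up to at
most `1 / j²`.
-/

open Finset Real

theorem one_div_abs_cube_sub_cube_le (a b : ℝ) :
    1 / |a ^ 3 - b ^ 3| ≤ 8 * (1 / (|a - b| * (a ^ 2 + (a - b) ^ 2))) := by
  rcases eq_or_ne a b with rfl | hab
  · simp
  have hd : 0 < |a - b| := abs_pos.mpr (sub_ne_zero.mpr hab)
  -- `8 (a² + ab + b²) - (a² + (a - b)²) = ((6a + 5b)² + 17 b²) / 6`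
  have hq : a ^ 2 + (a - b) ^ 2 ≤ 8 * (a ^ 2 + a * b + b ^ 2) := by
    nlinarith [sq_nonneg (6 * a + 5 * b), sq_nonneg b]
  have hfac : |a ^ 3 - b ^ 3| = |a - b| * (a ^ 2 + a * b + b ^ 2) := by
    rw [show a ^ 3 - b ^ 3 = (a - b) * (a ^ 2 + a * b + b ^ 2) by ring, abs_mul,
      abs_of_nonneg (a := a ^ 2 + a * b + b ^ 2) (by nlinarith [sq_nonneg (a + b)])]
  have hpos : 0 < |a ^ 3 - b ^ 3| := by
    rw [hfac]; exact mul_pos hd (by nlinarith [sq_pos_of_pos hd, sq_abs (a - b)])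
  rw [mul_one_div, div_le_div_iff₀ hpos (by positivity), hfac]
  nlinarith [mul_le_mul_of_nonneg_left hq hd.le]

theorem sum_range_succ_one_div_mul_sq_add_sq_le {J : ℕ} (hJ : J ≠ 0) :
    ∑ n ∈ range (J + 1), 1 / ((n : ℝ) * ((J : ℝ) ^ 2 + (n : ℝ) ^ 2))
      ≤ (1 + log J) / (J : ℝ) ^ 2 := by
  have hterm (n : ℕ) : 1 / ((n : ℝ) * ((J : ℝ) ^ 2 + (n : ℝ) ^ 2)) ≤ (n : ℝ)⁻¹ / (J : ℝ) ^ 2 := by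
    rcases n.eq_zero_or_pos with rfl | hn
    · simp
    exact (one_div_le_one_div_of_le (a := (n : ℝ) * (J : ℝ) ^ 2) (by positivity)
      (by nlinarith [sq_nonneg (n : ℝ)])).trans_eq (by ring)
  calc _ ≤ ∑ n ∈ range (J + 1), (n : ℝ)⁻¹ / (J : ℝ) ^ 2 := sum_le_sum fun n _ => hterm n
    _ = harmonic J / (J : ℝ) ^ 2 := by
        rw [← sum_div, sum_range_succ', harmonic]; push_cast; simp
    _ ≤ (1 + log J) / (J : ℝ) ^ 2 := by gcongr; exact harmonic_le_one_add_log J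

theorem sum_Ioo_one_div_mul_sq_add_sq_le {J : ℕ} (hJ : J ≠ 0) (N : ℕ) :
    ∑ n ∈ Ioo J N, 1 / ((n : ℝ) * ((J : ℝ) ^ 2 + (n : ℝ) ^ 2)) ≤ 1 / (J : ℝ) ^ 2 := by
  have hJpos : (0 : ℝ) < J := by positivity
  have hterm : ∀ n ∈ Ioo J N,
      1 / ((n : ℝ) * ((J : ℝ) ^ 2 + (n : ℝ) ^ 2)) ≤ ((n : ℝ) ^ 2)⁻¹ / (2 * J) := by
    intro n hn
    have hn0 : (0 : ℝ) < n := by exact_mod_cast (Nat.zero_le J).trans_lt (mem_Ioo.mp hn).1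
    exact (one_div_le_one_div_of_le (a := 2 * J * (n : ℝ) ^ 2) (by positivity)
      (by nlinarith [sq_nonneg ((J : ℝ) - n)])).trans_eq (by ring)
  calc _ ≤ ∑ n ∈ Ioo J N, ((n : ℝ) ^ 2)⁻¹ / (2 * J) := sum_le_sum hterm
    _ = (∑ n ∈ Ioo J N, ((n : ℝ) ^ 2)⁻¹) / (2 * J) := by rw [sum_div]
    _ ≤ (2 / (J + 1)) / (2 * J) := by gcongr; exact sum_Ioo_inv_sq_le J N
    _ ≤ 1 / (J : ℝ) ^ 2 := by
        rw [div_div, div_le_div_iff₀ (by positivity) (by positivity)]; nlinarith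

theorem sum_range_one_div_mul_sq_add_sq_le {J : ℕ} (hJ : J ≠ 0) (N : ℕ) :
    ∑ n ∈ range N, 1 / ((n : ℝ) * ((J : ℝ) ^ 2 + (n : ℝ) ^ 2)) ≤ (2 + log J) / (J : ℝ) ^ 2 := by
  rw [← sum_filter_add_sum_filter_not (range N) (· ≤ J)]
  calc _ ≤ ∑ n ∈ range (J + 1), 1 / ((n : ℝ) * ((J : ℝ) ^ 2 + (n : ℝ) ^ 2))
        + ∑ n ∈ Ioo J N, 1 / ((n : ℝ) * ((J : ℝ) ^ 2 + (n : ℝ) ^ 2)) := by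
        gcongr <;> intro n hn <;> simp only [mem_filter, mem_range, mem_Ioo] at hn ⊢ <;> omega
    _ ≤ (1 + log J) / (J : ℝ) ^ 2 + 1 / (J : ℝ) ^ 2 :=
        add_le_add (sum_range_succ_one_div_mul_sq_add_sq_le hJ)
          (sum_Ioo_one_div_mul_sq_add_sq_le hJ N)
    _ = (2 + log J) / (J : ℝ) ^ 2 := by ring

theorem summable_one_div_mul_sq_add_sq {J : ℕ} (hJ : J ≠ 0) :
    Summable fun n : ℕ => 1 / ((n : ℝ) * ((J : ℝ) ^ 2 + (n : ℝ) ^ 2)) :=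
  summable_of_sum_range_le (fun _ => by positivity) (sum_range_one_div_mul_sq_add_sq_le hJ)

theorem tsum_one_div_mul_sq_add_sq_le {J : ℕ} (hJ : J ≠ 0) :
    ∑' n : ℕ, 1 / ((n : ℝ) * ((J : ℝ) ^ 2 + (n : ℝ) ^ 2)) ≤ (2 + log J) / (J : ℝ) ^ 2 :=
  Real.tsum_le_of_sum_range_le (fun _ => by positivity) (sum_range_one_div_mul_sq_add_sq_le hJ)

theorem summable_int_one_div_abs_mul_sq_add_sq {J : ℕ} (hJ : J ≠ 0) :
    Summable fun m : ℤ => 1 / (|(m : ℝ)| * ((J : ℝ) ^ 2 + (m : ℝ) ^ 2)) := by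
  apply Summable.of_nat_of_neg
  · simpa using summable_one_div_mul_sq_add_sq hJ
  · simpa using summable_one_div_mul_sq_add_sq hJ

theorem tsum_int_one_div_abs_mul_sq_add_sq_le {J : ℕ} (hJ : J ≠ 0) :
    ∑' m : ℤ, 1 / (|(m : ℝ)| * ((J : ℝ) ^ 2 + (m : ℝ) ^ 2)) ≤ 2 * ((2 + log J) / (J : ℝ) ^ 2) := by
  have hnat := summable_one_div_mul_sq_add_sq hJ
  rw [Summable.tsum_of_nat_of_neg (by simpa using hnat) (by simpa using hnat)]
  have h := tsum_one_div_mul_sq_add_sq_le hJ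
  simpa [two_mul] using add_le_add h h

/-- There is `C > 0` such that for every integer `j ≥ 2`,
`∑_{k ≠ 0, k ≠ j} 1 / |j³ - k³| ≤ C log j / j²`. -/
theorem stmt_16 :
    ∃ C : ℝ, 0 < C ∧ ∀ j : ℕ, 2 ≤ j →
      (∑' k : {k : ℤ // k ≠ 0 ∧ k ≠ (j : ℤ)},
          1 / |(j : ℝ) ^ 3 - ((k : ℤ) : ℝ) ^ 3|)
        ≤ C * Real.log j / (j : ℝ) ^ 2 := by
  refine ⟨64, by norm_num, fun j hj => ?_⟩
  have hj0 : j ≠ 0 := by omega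
  set F : ℤ → ℝ := fun m => 1 / (|(m : ℝ)| * ((j : ℝ) ^ 2 + (m : ℝ) ^ 2))
  have hmaj (k : ℤ) : 1 / |(j : ℝ) ^ 3 - (k : ℝ) ^ 3| ≤ 8 * F (j - k) := by
    simpa [F] using one_div_abs_cube_sub_cube_le j k
  have hFshift : Summable fun k : ℤ => 8 * F (j - k) :=
    ((summable_int_one_div_abs_mul_sq_add_sq hj0).comp_injective sub_right_injective).mul_left 8
  have hsum : Summable fun k : ℤ => 1 / |(j : ℝ) ^ 3 - (k : ℝ) ^ 3| :=
    hFshift.of_nonneg_of_le (fun _ => by positivity) hmaj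
  have hlog : 2 / 3 < log j := calc
    (2 / 3 : ℝ) < log 2 := by linarith [log_two_gt_d9]
    _ ≤ log j := log_le_log (by norm_num) (by exact_mod_cast hj)
  calc _ ≤ ∑' k : ℤ, 1 / |(j : ℝ) ^ 3 - (k : ℝ) ^ 3| :=
        hsum.tsum_subtype_le _ {k | k ≠ 0 ∧ k ≠ (j : ℤ)} (fun _ => by positivity)
    _ ≤ ∑' k : ℤ, 8 * F (j - k) := hsum.tsum_le_tsum hmaj hFshift
    _ = 8 * ∑' m : ℤ, F m := by
        rw [tsum_mul_left]; congr 1; exact (Equiv.subLeft (j : ℤ)).tsum_eq F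
    _ ≤ 8 * (2 * ((2 + log j) / (j : ℝ) ^ 2)) := by
        gcongr; exact tsum_int_one_div_abs_mul_sq_add_sq_le hj0
    _ ≤ 64 * log j / (j : ℝ) ^ 2 := by
        rw [← mul_div_assoc, ← mul_div_assoc]
        exact div_le_div_of_nonneg_right (by linarith) (by positivity)
end

section
/- For every λ∈ℝ there exists a constant C>0 such that for every nonzero integer j, ∑_{k∈ℤ, k≠0, k≠j} (λ² + k⁶)/((j³−k³)²·k²) ≤ C. -/
/-!
Since `j³ - k³ = (j - k)(j² + jk + k²)` and `j² + jk + k² ≥ ¾ k²`, each term is at most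
`(16/9)(λ² + 1) / (j - k)²` once `k² ≥ 1`. Summing over `k`, the shift `k ↦ j - k` turns the
majorant into `(16/9)(λ² + 1) ∑_{n ∈ ℤ} 1/n²`, which does not depend on `j`.
-/

lemma three_quarters_mul_sq_le (x y : ℝ) : 3 / 4 * y ^ 2 ≤ x ^ 2 + x * y + y ^ 2 := by
  nlinarith [sq_nonneg (2 * x + y)]

lemma sq_sub_mul_pow_six_le (x y : ℝ) :
    9 / 16 * ((x - y) ^ 2 * y ^ 6) ≤ (x ^ 3 - y ^ 3) ^ 2 * y ^ 2 := by
  have h := three_quarters_mul_sq_le x y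
  calc 9 / 16 * ((x - y) ^ 2 * y ^ 6) = (x - y) ^ 2 * y ^ 2 * (3 / 4 * y ^ 2) ^ 2 := by ring
    _ ≤ (x - y) ^ 2 * y ^ 2 * (x ^ 2 + x * y + y ^ 2) ^ 2 := by gcongr
    _ = (x ^ 3 - y ^ 3) ^ 2 * y ^ 2 := by ring

/-- For `x = y` both sides are `0` by the convention `a / 0 = 0`. -/
lemma div_sq_cube_sub_le (lam x y : ℝ) (hy : 1 ≤ y ^ 2) :
    (lam ^ 2 + y ^ 6) / ((x ^ 3 - y ^ 3) ^ 2 * y ^ 2) ≤ 16 / 9 * (lam ^ 2 + 1) / (x - y) ^ 2 := by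
  rcases eq_or_ne x y with rfl | hne
  · simp
  have hxy : 0 < (x - y) ^ 2 := by positivity [sub_ne_zero.mpr hne]
  have hy0 : y ≠ 0 := by rintro rfl; norm_num at hy
  have hy6 : 1 ≤ y ^ 6 := by simpa [← pow_mul] using one_le_pow₀ (n := 3) hy
  calc (lam ^ 2 + y ^ 6) / ((x ^ 3 - y ^ 3) ^ 2 * y ^ 2)
      ≤ (lam ^ 2 + 1) * y ^ 6 / (9 / 16 * ((x - y) ^ 2 * y ^ 6)) :=
        div_le_div₀ (by positivity) (by nlinarith [sq_nonneg lam]) (by positivity)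
          (sq_sub_mul_pow_six_le x y)
    _ = 16 / 9 * (lam ^ 2 + 1) / (x - y) ^ 2 := by field_simp

lemma tsum_subtype_le_of_le {ι : Type*} {p : ι → Prop} {f : {k // p k} → ℝ} {g : ι → ℝ}
    (hf : ∀ k, 0 ≤ f k) (hfg : ∀ k, f k ≤ g k) (hg₀ : ∀ k, 0 ≤ g k) (hg : Summable g) :
    ∑' k, f k ≤ ∑' k, g k :=
  have hgs : Summable fun k : {k // p k} => g k := hg.subtype {k | p k}
  (Summable.tsum_le_tsum hfg (hgs.of_nonneg_of_le hf hfg) hgs).trans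
    (hg.tsum_subtype_le g {k | p k} hg₀)

/-- For every real `λ` there is `C > 0` such that for every nonzero integer `j`,
`∑_{k ≠ 0, k ≠ j} (λ² + k⁶) / ((j³ - k³)² k²) ≤ C`. -/
theorem stmt_17 (lam : ℝ) :
    ∃ C : ℝ, 0 < C ∧ ∀ j : ℤ, j ≠ 0 →
      (∑' k : {k : ℤ // k ≠ 0 ∧ k ≠ j},
          (lam ^ 2 + ((k : ℤ) : ℝ) ^ 6) /
            (((j : ℝ) ^ 3 - ((k : ℤ) : ℝ) ^ 3) ^ 2 * ((k : ℤ) : ℝ) ^ 2))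
        ≤ C := by
  set F : ℤ → ℝ := fun n => 16 / 9 * (lam ^ 2 + 1) / (n : ℝ) ^ 2 with hF_def
  -- Opaque `F` keeps unification from unfolding it when matching `F (j - k)`.
  clear_value F
  have hF : Summable F := by
    simpa only [hF_def, mul_one_div] using
      (Real.summable_one_div_int_pow.mpr one_lt_two).mul_left (16 / 9 * (lam ^ 2 + 1))
  have hF₀ (n : ℤ) : 0 ≤ F n := by rw [hF_def]; positivity
  refine ⟨∑' n, F n, hF.tsum_pos hF₀ 1 (by norm_num [hF_def]; positivity), fun j _ => ?_⟩
  have hle (k : {k : ℤ // k ≠ 0 ∧ k ≠ j}) : (lam ^ 2 + ((k : ℤ) : ℝ) ^ 6) /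
      (((j : ℝ) ^ 3 - ((k : ℤ) : ℝ) ^ 3) ^ 2 * ((k : ℤ) : ℝ) ^ 2) ≤ F (j - k) := by
    have hk : (1 : ℝ) ≤ ((k : ℤ) : ℝ) ^ 2 :=
      mod_cast (one_le_sq_iff_one_le_abs _).mpr (Int.one_le_abs k.2.1)
    simpa only [hF_def, Int.cast_sub] using div_sq_cube_sub_le lam j k hk
  exact (tsum_subtype_le_of_le (fun k => by positivity) hle (fun k => hF₀ _)
    ((Equiv.subLeft j).summable_iff.mpr hF)).trans_eq ((Equiv.subLeft j).tsum_eq F)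
end
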